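/- arXiv:1910.09755 — 8 statements merged into one kernel-verified Lean document; each statement's English description precedes it below -/
import Mathlib

section
/- Let n, m be natural numbers, let α ≥ 1 be a real number, and let S be a finite subset of (ZMod 2)^n with |S| ≥ 2^(m+α). Then the probability, over a uniformly random pair (A, b) where A is an m×n matrix over ZMod 2 and b ∈ (ZMod 2)^m, that there exists x ∈ S with A·x = b is at least 1 - 2^(-α). -/
open Finset Filter
open scoped Classical

/-- Probability of event `P` over a uniformly random pair `(A, b)` with `A` an
`m × n` matrix over `ZMod 2` and `b : Fin m → ZMod 2`. -/
noncomputable def xorProb (n m : ℕ)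
    (P : Matrix (Fin m) (Fin n) (ZMod 2) × (Fin m → ZMod 2) → Prop) : ℝ :=
  (Finset.univ.filter P).card /
    Fintype.card (Matrix (Fin m) (Fin n) (ZMod 2) × (Fin m → ZMod 2))

/-- The random 1-CARD-XOR formula `ψ(n,k,m)` is satisfied by the pair `(A, b)`:
there is an assignment of Hamming weight at most `k` solving `A ⬝ x = b`. -/
def cardXorSat (n k m : ℕ)
    (ab : Matrix (Fin m) (Fin n) (ZMod 2) × (Fin m → ZMod 2)) : Prop :=
  ∃ x : Fin n → ZMod 2, hammingNorm x ≤ k ∧ ab.1.mulVec x = ab.2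

/-- Probability that `ψ(n,k,m)` is satisfiable. -/
noncomputable def satProb (n k m : ℕ) : ℝ := xorProb n m (cardXorSat n k m)

/-- Probability that `ψ(n,k,m)` is unsatisfiable. -/
noncomputable def unsatProb (n k m : ℕ) : ℝ := xorProb n m fun ab => ¬ cardXorSat n k m ab

/-- `#F(n,k) = ∑_{w=0}^{k} C(n,w)`, the number of solutions of the at-most-`k`
cardinality constraint on `n` variables. -/
def cardSum (n k : ℕ) : ℕ := ∑ w ∈ Finset.range (k + 1), n.choose w

/-- The binary entropy function (with `H 0 = H 1 = 0` by `logb` junk values). -/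
noncomputable def binEnt (μ : ℝ) : ℝ :=
  -μ * Real.logb 2 μ - (1 - μ) * Real.logb 2 (1 - μ)

/-!
Second moment method. Let `X (A, b) = #{x ∈ S | A x = b}` and `M = 2 ^ m`. Each event `A x = b`
has probability `1 / M`, and for `x ≠ y` the events `A x = b`, `A y = b` are independent, because
`(A, b) ↦ (A x - b, A y - b)` is a surjective additive map. Hence `E X = N / M` and
`E X² ≤ N / M + N² / M²` for `N = #S`, so Cauchy–Schwarz gives
`P (X > 0) ≥ (E X)² / E X² ≥ N / (N + M)`, which is at least `1 - 2 ^ (-α)` once `N ≥ 2 ^ α M`.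
-/

namespace Finset

variable {ι Ω : Type*} [DecidableEq Ω]

theorem sq_sum_card_le_card_biUnion_mul_sum_card_inter (s : Finset ι) (E : ι → Finset Ω) :
    (∑ i ∈ s, #(E i)) ^ 2 ≤ #(s.biUnion E) * ∑ i ∈ s, ∑ j ∈ s, #(E i ∩ E j) := by
  set U := s.biUnion E
  have card_eq_sum {t : Finset Ω} (ht : t ⊆ U) : #t = ∑ ω ∈ U, if ω ∈ t then (1 : ℕ) else 0 := by
    rw [sum_ite_mem, inter_eq_right.mpr ht, card_eq_sum_ones]
  have hsub (i : ι) (hi : i ∈ s) : E i ⊆ U := subset_biUnion_of_mem E hi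
  -- both sides are moments of the multiplicity `ω ↦ #{i ∈ s | ω ∈ E i}` on `U`
  have first_moment : ∑ i ∈ s, #(E i) = ∑ ω ∈ U, ∑ i ∈ s, if ω ∈ E i then (1 : ℕ) else 0 := by
    rw [sum_comm]
    exact sum_congr rfl fun i hi => card_eq_sum (hsub i hi)
  have second_moment : ∑ i ∈ s, ∑ j ∈ s, #(E i ∩ E j) =
      ∑ ω ∈ U, (∑ i ∈ s, if ω ∈ E i then (1 : ℕ) else 0) ^ 2 := by
    have hinter (i : ι) (hi : i ∈ s) (j : ι) :
        #(E i ∩ E j) = ∑ ω ∈ U, if ω ∈ E i ∩ E j then 1 else 0 :=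
      card_eq_sum (inter_subset_left.trans (hsub i hi))
    simp_rw [sq, sum_mul_sum, ite_zero_mul_ite_zero, mul_one, ← mem_inter]
    symm
    rw [sum_comm]
    exact sum_congr rfl fun i hi => sum_comm.trans (sum_congr rfl fun j _ => (hinter i hi j).symm)
  rw [first_moment, second_moment]
  exact sq_sum_le_card_mul_sum_sq

end Finset

theorem AddMonoidHom.card_fiber_mul_card_of_surjective {G H : Type*} [AddGroup G] [Fintype G]
    [AddMonoid H] [Fintype H] [DecidableEq H] (f : G →+ H) (hf : Function.Surjective f) (y : H) :
    #{g | f g = y} * Fintype.card H = Fintype.card G := calc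
  _ = ∑ z : H, #{g | f g = z} := by
    rw [sum_congr rfl fun z _ => AddMonoidHom.card_fiber_eq_of_mem_range f (hf z) (hf y),
      sum_const, card_univ, smul_eq_mul, mul_comm]
  _ = Fintype.card G := (card_eq_sum_card_fiberwise fun _ _ => mem_univ _).symm

section MatrixSystem

variable {K ι κ : Type*} [Field K] [Fintype κ]

open Matrix

def residualHom (x : κ → K) : Matrix ι κ K × (ι → K) →+ (ι → K) :=
  (mulVec.addMonoidHomLeft x).comp (AddMonoidHom.fst _ _) - AddMonoidHom.snd _ _

theorem residualHom_apply (x : κ → K) (ab : Matrix ι κ K × (ι → K)) :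
    residualHom x ab = ab.1 *ᵥ x - ab.2 := rfl

theorem residualHom_surjective (x : κ → K) :
    Function.Surjective (residualHom (ι := ι) x) :=
  fun u => ⟨(0, -u), by simp [residualHom_apply]⟩

theorem residualHom_prod_surjective {x y : κ → K} (hxy : x ≠ y) :
    Function.Surjective ((residualHom (ι := ι) x).prod (residualHom y)) := by
  obtain ⟨i, hi⟩ := Function.ne_iff.mp hxy
  rintro ⟨u, w⟩
  -- a rank-one `A` with `A *ᵥ (x - y) = u - w`; then `b` is forced
  set A : Matrix ι κ K := vecMulVec (u - w) (Pi.single i (x i - y i)⁻¹)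
  have hA (v : κ → K) : A *ᵥ v = ((x i - y i)⁻¹ * v i) • (u - w) := by
    rw [vecMulVec_mulVec, single_dotProduct, op_smul_eq_smul]
  refine ⟨(A, A *ᵥ x - u), Prod.ext ?_ ?_⟩
  · simp [residualHom_apply]
  · have hxy : A *ᵥ x - A *ᵥ y = u - w := by
      rw [← mulVec_sub, hA, Pi.sub_apply, inv_mul_cancel₀ (sub_ne_zero.mpr hi), one_smul]
    simp only [AddMonoidHom.prod_apply, residualHom_apply]
    linear_combination -hxy

variable [Fintype K] [DecidableEq K] [Fintype ι] [DecidableEq ι] [DecidableEq κ]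

theorem card_filter_mulVec_eq_mul (x : κ → K) :
    #{ab : Matrix ι κ K × (ι → K) | ab.1 *ᵥ x = ab.2} * Fintype.card K ^ Fintype.card ι =
      Fintype.card (Matrix ι κ K × (ι → K)) := by
  rw [← Fintype.card_fun, ← (residualHom x).card_fiber_mul_card_of_surjective
    (residualHom_surjective x) 0]
  simp only [residualHom_apply, sub_eq_zero]

theorem card_filter_mulVec_eq_and_mulVec_eq_mul {x y : κ → K} (hxy : x ≠ y) :
    #{ab : Matrix ι κ K × (ι → K) | ab.1 *ᵥ x = ab.2 ∧ ab.1 *ᵥ y = ab.2} *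
        (Fintype.card K ^ Fintype.card ι) ^ 2 =
      Fintype.card (Matrix ι κ K × (ι → K)) := by
  rw [sq, ← Fintype.card_fun, ← Fintype.card_prod, ← ((residualHom x).prod
    (residualHom y)).card_fiber_mul_card_of_surjective (residualHom_prod_surjective hxy) 0]
  simp only [AddMonoidHom.prod_apply, Prod.mk_eq_zero, residualHom_apply, sub_eq_zero]

theorem card_mul_le_card_filter_exists_mulVec_eq (S : Finset (κ → K)) :
    #S * Fintype.card (Matrix ι κ K × (ι → K)) ≤
      #{ab : Matrix ι κ K × (ι → K) | ∃ x ∈ S, ab.1 *ᵥ x = ab.2} *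
        (#S + Fintype.card K ^ Fintype.card ι) := by
  set P := Fintype.card (Matrix ι κ K × (ι → K))
  set M := Fintype.card K ^ Fintype.card ι
  set E : (κ → K) → Finset (Matrix ι κ K × (ι → K)) := fun x => {ab | ab.1 *ᵥ x = ab.2}
  have hT : ({ab | ∃ x ∈ S, ab.1 *ᵥ x = ab.2} : Finset (Matrix ι κ K × (ι → K))) =
      S.biUnion E := by
    ext; simp [E]
  have first_moment : (∑ x ∈ S, #(E x)) * M = #S * P := by
    rw [sum_mul, sum_congr rfl fun x _ => card_filter_mulVec_eq_mul x, sum_const, smul_eq_mul]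
  have pair (x y : κ → K) : #(E x ∩ E y) * M ^ 2 ≤ P + if x = y then P * M else 0 := by
    by_cases hxy : x = y
    · rw [hxy, inter_self, if_pos rfl, sq, ← mul_assoc, card_filter_mulVec_eq_mul]
      exact Nat.le_add_left _ _
    · rw [if_neg hxy, add_zero, ← filter_and]
      exact (card_filter_mulVec_eq_and_mulVec_eq_mul hxy).le
  have second_moment : (∑ x ∈ S, ∑ y ∈ S, #(E x ∩ E y)) * M ^ 2 ≤ #S * P * (#S + M) := calc
    _ = ∑ x ∈ S, ∑ y ∈ S, #(E x ∩ E y) * M ^ 2 := by simp_rw [sum_mul]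
    _ ≤ ∑ x ∈ S, ∑ y ∈ S, (P + if x = y then P * M else 0) := by
      gcongr with x _ y _
      exact pair x y
    _ = ∑ x ∈ S, (#S * P + P * M) := sum_congr rfl fun x hx => by
      rw [sum_add_distrib, sum_const, sum_ite_eq, if_pos hx, smul_eq_mul]
    _ = #S * P * (#S + M) := by rw [sum_const, smul_eq_mul]; ring
  rw [hT]
  rcases (#S * P).eq_zero_or_pos with h | h
  · rw [h]
    exact Nat.zero_le _
  refine Nat.le_of_mul_le_mul_left ?_ h
  calc #S * P * (#S * P) = (∑ x ∈ S, #(E x)) ^ 2 * M ^ 2 := by rw [← first_moment]; ring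
    _ ≤ #(S.biUnion E) * (∑ x ∈ S, ∑ y ∈ S, #(E x ∩ E y)) * M ^ 2 :=
      Nat.mul_le_mul_right _ (sq_sum_card_le_card_biUnion_mul_sum_card_inter S E)
    _ ≤ #(S.biUnion E) * (#S * P * (#S + M)) := by
      rw [mul_assoc]
      exact Nat.mul_le_mul_left _ second_moment
    _ = #S * P * (#(S.biUnion E) * (#S + M)) := by ring

end MatrixSystem

theorem one_sub_inv_mul_add_le {a M N : ℝ} (ha : 0 < a) (hM : 0 ≤ M) (h : M * a ≤ N) :
    (1 - a⁻¹) * (N + M) ≤ N := by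
  have key : M ≤ a⁻¹ * (N + M) := by
    rw [inv_mul_eq_div, le_div_iff₀ ha]
    linarith
  linarith

theorem stmt0_general (n m : ℕ) (α : ℝ) (S : Finset (Fin n → ZMod 2))
    (hS : (2 : ℝ) ^ ((m : ℝ) + α) ≤ S.card) :
    1 - (2 : ℝ) ^ (-α) ≤
      xorProb n m (fun ab => ∃ x ∈ S, ab.1.mulVec x = ab.2) := by
  set P := Fintype.card (Matrix (Fin m) (Fin n) (ZMod 2) × (Fin m → ZMod 2))
  have count := card_mul_le_card_filter_exists_mulVec_eq (ι := Fin m) S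
  rw [ZMod.card, Fintype.card_fin] at count
  have count' : (#S * P : ℝ) ≤ #{ab : Matrix (Fin m) (Fin n) (ZMod 2) × (Fin m → ZMod 2) |
      ∃ x ∈ S, ab.1.mulVec x = ab.2} * (#S + 2 ^ m) := by
    exact_mod_cast count
  have hS' : (2 : ℝ) ^ m * 2 ^ α ≤ #S := by
    rwa [Real.rpow_add two_pos, Real.rpow_natCast] at hS
  have hP : (0 : ℝ) < P := by exact_mod_cast Fintype.card_pos
  rw [xorProb, le_div_iff₀ hP, Real.rpow_neg zero_le_two]
  refine le_of_mul_le_mul_right ?_ (by positivity : (0 : ℝ) < #S + 2 ^ m)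
  calc (1 - ((2 : ℝ) ^ α)⁻¹) * P * (#S + 2 ^ m) = (1 - (2 ^ α)⁻¹) * (#S + 2 ^ m) * P := by ring
    _ ≤ (#S * P : ℝ) := by gcongr; exact one_sub_inv_mul_add_le (by positivity) (by positivity) hS'
    _ ≤ _ := by convert count'

theorem stmt0 (n m : ℕ) (α : ℝ) (hα : 1 ≤ α) (S : Finset (Fin n → ZMod 2))
    (hS : (2 : ℝ) ^ ((m : ℝ) + α) ≤ S.card) :
    1 - (2 : ℝ) ^ (-α) ≤
      xorProb n m (fun ab => ∃ x ∈ S, ab.1.mulVec x = ab.2) :=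
  stmt0_general n m α S hS
end

section
/- Let n, m be natural numbers, let α ≥ 1 be a real number, and let S be a finite subset of (ZMod 2)^n with |S| ≤ 2^(m-α). Then the probability, over a uniformly random pair (A, b) where A is an m×n matrix over ZMod 2 and b ∈ (ZMod 2)^m, that no x ∈ S satisfies A·x = b is at least 1 - 2^(-α). -/
open Finset Filter
open scoped Classical

/-! Union bound: for a fixed `x` the pairs `(A, b)` with `A x = b` form the graph of
`A ↦ A x`, so `A x = b` has probability exactly `2⁻ᵐ`, and some `x ∈ S` is a solution with
probability at most `|S| 2⁻ᵐ ≤ 2^(-α)`. -/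

open scoped Matrix

theorem Finset.card_filter_apply_fst_eq_snd {α β : Type*} [Fintype α] [Fintype β]
    [DecidableEq β] (f : α → β) :
    #{p : α × β | f p.1 = p.2} = Fintype.card α := by
  have graph_eq :
      ({p : α × β | f p.1 = p.2} : Finset (α × β)) = univ.image fun a => (a, f a) := by
    ext ⟨a, b⟩
    simp [eq_comm]
  rw [graph_eq, card_image_of_injective _ fun a a' h => (Prod.mk.inj h).1, card_univ]

section xorProb

variable {n m : ℕ}

theorem xorProb_eq_card_div (P : Matrix (Fin m) (Fin n) (ZMod 2) × (Fin m → ZMod 2) → Prop)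
    [DecidablePred P] :
    xorProb n m P =
      #{ab | P ab} / Fintype.card (Matrix (Fin m) (Fin n) (ZMod 2) × (Fin m → ZMod 2)) := by
  rw [xorProb, filter_congr_decidable]

theorem xorProb_not (P : Matrix (Fin m) (Fin n) (ZMod 2) × (Fin m → ZMod 2) → Prop)
    [DecidablePred P] :
    xorProb n m (fun ab => ¬ P ab) = 1 - xorProb n m P := by
  have hsplit := card_filter_add_card_filter_not (s := univ) P
  have hpos : (0 : ℝ) < Fintype.card (Matrix (Fin m) (Fin n) (ZMod 2) × (Fin m → ZMod 2)) := by
    exact_mod_cast Fintype.card_pos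
  rw [card_univ] at hsplit
  rw [xorProb_eq_card_div, xorProb_eq_card_div, eq_sub_iff_add_eq, ← add_div,
    div_eq_one_iff_eq hpos.ne', ← hsplit, Nat.cast_add, add_comm]

theorem xorProb_exists_le {ι : Type*} (S : Finset ι)
    (P : ι → Matrix (Fin m) (Fin n) (ZMod 2) × (Fin m → ZMod 2) → Prop)
    [∀ i, DecidablePred (P i)] :
    xorProb n m (fun ab => ∃ i ∈ S, P i ab) ≤ ∑ i ∈ S, xorProb n m (P i) := by
  have union_bound : #{ab | ∃ i ∈ S, P i ab} ≤ ∑ i ∈ S, #{ab | P i ab} :=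
    calc #{ab | ∃ i ∈ S, P i ab}
        _ ≤ #(S.biUnion fun i => {ab | P i ab}) := card_le_card fun ab => by simp
        _ ≤ ∑ i ∈ S, #{ab | P i ab} := card_biUnion_le
  simp only [xorProb_eq_card_div, ← sum_div]
  gcongr
  exact_mod_cast union_bound

theorem xorProb_mulVec_eq (x : Fin n → ZMod 2) :
    xorProb n m (fun ab => ab.1 *ᵥ x = ab.2) = (2 ^ m)⁻¹ := by
  rw [xorProb_eq_card_div, card_filter_apply_fst_eq_snd (· *ᵥ x), Fintype.card_prod]
  simp only [Fintype.card_fun, ZMod.card, Fintype.card_fin]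
  push_cast
  field_simp

theorem one_sub_card_div_le_xorProb_forall_mulVec_ne (S : Finset (Fin n → ZMod 2)) :
    1 - #S / (2 : ℝ) ^ m ≤ xorProb n m (fun ab => ∀ x ∈ S, ab.1 *ᵥ x ≠ ab.2) := by
  have hbad := xorProb_exists_le S fun x (ab : Matrix (Fin m) (Fin n) (ZMod 2) × _) =>
    ab.1 *ᵥ x = ab.2
  simp only [xorProb_mulVec_eq, sum_const, nsmul_eq_mul] at hbad
  simp only [← not_exists, exists_prop, xorProb_not]
  rw [div_eq_mul_inv]
  linarith

end xorProb

theorem stmt1_general (n m : ℕ) (α : ℝ) (S : Finset (Fin n → ZMod 2))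
    (hS : (S.card : ℝ) ≤ (2 : ℝ) ^ ((m : ℝ) - α)) :
    1 - (2 : ℝ) ^ (-α) ≤
      xorProb n m (fun ab => ∀ x ∈ S, ab.1.mulVec x ≠ ab.2) := by
  refine le_trans ?_ (one_sub_card_div_le_xorProb_forall_mulVec_ne S)
  have h2m : (2 : ℝ) ^ ((m : ℝ) - α) / 2 ^ m = 2 ^ (-α) := by
    rw [Real.rpow_sub two_pos, Real.rpow_natCast, Real.rpow_neg zero_le_two]
    field_simp
  gcongr
  exact h2m ▸ div_le_div_of_nonneg_right hS (by positivity)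

theorem stmt1 (n m : ℕ) (α : ℝ) (hα : 1 ≤ α) (S : Finset (Fin n → ZMod 2))
    (hS : (S.card : ℝ) ≤ (2 : ℝ) ^ ((m : ℝ) - α)) :
    1 - (2 : ℝ) ^ (-α) ≤
      xorProb n m (fun ab => ∀ x ∈ S, ab.1.mulVec x ≠ ab.2) :=
  stmt1_general n m α S hS
end

section
/- Let s ≥ 0 be a real number and (k_n) a sequence of natural numbers with k_n ≤ n. Suppose there exists δ > 0 such that for all sufficiently large n, s + δ ≤ (1/n)·log₂(#F(n, k_n)). Then the probability that the random 1-CARD-XOR formula ψ(n, k_n, ⌈s·n⌉) is satisfiable tends to 1 as n → ∞. -/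
open Finset Filter
open scoped Classical

section Aux
open Matrix

lemma zmod2_eq_of_ne_iff {a b : ZMod 2} (h : (a ≠ 0 ↔ b ≠ 0)) : a = b := by
  revert h; revert a b; decide

lemma card_norm (n w : ℕ) :
    ((univ : Finset (Fin n → ZMod 2)).filter fun x => hammingNorm x = w).card = n.choose w := by
  rw [show n.choose w = #(Finset.powersetCard w (univ : Finset (Fin n))) by
    simp [Finset.card_powersetCard]]
  apply Finset.card_bij (fun x _ => ({i | x i ≠ 0} : Finset _))
  · intro x hx
    simp only [Finset.mem_filter, Finset.mem_univ, true_and] at hx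
    simp [Finset.mem_powersetCard, ← hx, hammingNorm]
  · intro x hx y hy hxy
    funext i
    apply zmod2_eq_of_ne_iff
    constructor <;> intro h
    · have : i ∈ ({i | x i ≠ 0} : Finset _) := by simpa using h
      rw [hxy] at this; simpa using this
    · have : i ∈ ({i | y i ≠ 0} : Finset _) := by simpa using h
      rw [← hxy] at this; simpa using this
  · intro t ht
    refine ⟨fun i => if i ∈ t then 1 else 0, ?_, ?_⟩
    · simp only [Finset.mem_filter, Finset.mem_univ, true_and]
      rw [Finset.mem_powersetCard] at ht
      rw [← ht.2, hammingNorm]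
      congr 1
      ext i
      by_cases hi : i ∈ t <;> simp [hi]
    · ext i
      by_cases hi : i ∈ t <;> simp [hi]


lemma card_hamming_le (n k : ℕ) :
    ((univ : Finset (Fin n → ZMod 2)).filter fun x => hammingNorm x ≤ k).card = cardSum n k := by
  rw [cardSum]
  rw [Finset.card_eq_sum_card_fiberwise (f := hammingNorm) (t := Finset.range (k+1))
    (fun x hx => by simp only [Finset.mem_coe, Finset.mem_filter] at hx; simp [Nat.lt_succ_iff, hx.2])]
  refine Finset.sum_congr rfl fun w hw => ?_
  rw [Finset.filter_filter, ← card_norm n w]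
  congr 1
  apply Finset.filter_congr
  intro x _
  simp only [Finset.mem_range, Nat.lt_succ_iff] at hw
  constructor
  · rintro ⟨_, h⟩; exact h
  · intro h; exact ⟨h ▸ hw, h⟩


lemma zmod2_add_ne {a b c d : ZMod 2} (h : a = b) (h2 : c ≠ d) : a + c ≠ b + d := by
  revert h h2; revert a b c d; decide

lemma zmod2_add_eq {a b c d : ZMod 2} (h : a ≠ b) (h2 : c ≠ d) : a + c = b + d := by
  revert h h2; revert a b c d; decide

lemma rowcount {n : ℕ} (x y : Fin n → ZMod 2) (hxy : x ≠ y) :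
    ((univ : Finset (Fin n → ZMod 2)).filter fun r => r ⬝ᵥ x = r ⬝ᵥ y).card = 2 ^ (n - 1) := by
  obtain ⟨j, hj⟩ : ∃ j, x j ≠ y j := by
    by_contra hc; push_neg at hc; exact hxy (funext hc)
  have hdot : ∀ (r : Fin n → ZMod 2) (v : Fin n → ZMod 2),
      (r + Pi.single j 1) ⬝ᵥ v = r ⬝ᵥ v + v j := by
    intro r v
    rw [add_dotProduct, single_dotProduct, one_mul]
  have key : ((univ : Finset (Fin n → ZMod 2)).filter fun r => r ⬝ᵥ x = r ⬝ᵥ y).card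
      = ((univ : Finset (Fin n → ZMod 2)).filter fun r => ¬ (r ⬝ᵥ x = r ⬝ᵥ y)).card := by
    apply Finset.card_bij (fun r _ => r + Pi.single j 1)
    · intro r hr
      simp only [Finset.mem_filter, Finset.mem_univ, true_and] at hr ⊢
      rw [hdot, hdot]
      exact zmod2_add_ne hr hj
    · intro r _ rr _ hrr
      exact add_left_injective _ hrr
    · intro r hr
      simp only [Finset.mem_filter, Finset.mem_univ, true_and] at hr
      refine ⟨r + Pi.single j 1, ?_, ?_⟩
      · simp only [Finset.mem_filter, Finset.mem_univ, true_and]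
        rw [hdot, hdot]
        exact zmod2_add_eq hr hj
      · rw [add_assoc, ← Pi.single_add, show ((1:ZMod 2)+1) = 0 from by decide]
        simp
  have total := Finset.card_filter_add_card_filter_not
    (s := (univ : Finset (Fin n → ZMod 2))) (p := fun r => r ⬝ᵥ x = r ⬝ᵥ y)
  have hcard : (univ : Finset (Fin n → ZMod 2)).card = 2 ^ n := by
    simp [Finset.card_univ]
  have hn : 1 ≤ n := by
    rcases Nat.eq_zero_or_pos n with h0 | h1
    · subst h0; exact absurd (Subsingleton.elim x y) hxy
    · exact h1
  have h2n : 2 ^ n = 2 * 2 ^ (n - 1) := by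
    rw [← pow_succ']
    congr 1
    omega
  omega

lemma card_pair_single (n m : ℕ) (x : Fin n → ZMod 2) :
    ((univ : Finset (Matrix (Fin m) (Fin n) (ZMod 2) × (Fin m → ZMod 2))).filter
      fun ab => ab.1.mulVec x = ab.2).card = 2 ^ (m * n) := by
  rw [show (2:ℕ) ^ (m * n) = Fintype.card (Matrix (Fin m) (Fin n) (ZMod 2)) by
    rw [show Fintype.card (Matrix (Fin m) (Fin n) (ZMod 2))
        = Fintype.card (Fin m → Fin n → ZMod 2) from rfl]
    simp [Fintype.card_fun, ← pow_mul, mul_comm]]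
  rw [← Finset.card_univ]
  apply Finset.card_bij (fun ab _ => ab.1)
  · intros; exact Finset.mem_univ _
  · intro ab hab cd hcd h
    simp only [Finset.mem_filter, Finset.mem_univ, true_and] at hab hcd
    exact Prod.ext h (by rw [← hab, ← hcd, h])
  · intro A _
    exact ⟨(A, A.mulVec x), by simp, rfl⟩

lemma card_pair_two (n m : ℕ) (x y : Fin n → ZMod 2) (hxy : x ≠ y) :
    ((univ : Finset (Matrix (Fin m) (Fin n) (ZMod 2) × (Fin m → ZMod 2))).filter
      fun ab => ab.1.mulVec x = ab.2 ∧ ab.1.mulVec y = ab.2).card = 2 ^ (m * (n - 1)) := by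
  have step1 : ((univ : Finset (Matrix (Fin m) (Fin n) (ZMod 2) × (Fin m → ZMod 2))).filter
      fun ab => ab.1.mulVec x = ab.2 ∧ ab.1.mulVec y = ab.2).card
      = ((univ : Finset (Matrix (Fin m) (Fin n) (ZMod 2))).filter
        fun A => A.mulVec x = A.mulVec y).card := by
    apply Finset.card_bij (fun ab _ => ab.1)
    · intro ab hab
      simp only [Finset.mem_filter, Finset.mem_univ, true_and] at hab ⊢
      rw [hab.1, hab.2]
    · intro ab hab cd hcd h
      simp only [Finset.mem_filter, Finset.mem_univ, true_and] at hab hcd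
      exact Prod.ext h (by rw [← hab.1, ← hcd.1, h])
    · intro A hA
      simp only [Finset.mem_filter, Finset.mem_univ, true_and] at hA
      exact ⟨(A, A.mulVec x), by simp [hA], rfl⟩
  rw [step1]
  have step2 : ((univ : Finset (Matrix (Fin m) (Fin n) (ZMod 2))).filter
        fun A => A.mulVec x = A.mulVec y)
      = Fintype.piFinset (fun _ : Fin m =>
        (univ : Finset (Fin n → ZMod 2)).filter fun r => r ⬝ᵥ x = r ⬝ᵥ y) := by
    ext A
    simp only [Finset.mem_filter, Finset.mem_univ, true_and]
    constructor
    · intro hA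
      refine Fintype.mem_piFinset.mpr fun i => ?_
      simp only [Finset.mem_filter, Finset.mem_univ, true_and]
      exact congrFun hA i
    · intro hA
      funext i
      have h2 := Fintype.mem_piFinset.mp hA i
      simp only [Finset.mem_filter, Finset.mem_univ, true_and] at h2
      exact h2
  rw [step2]
  refine (Fintype.card_piFinset (fun _ : Fin m =>
    (univ : Finset (Fin n → ZMod 2)).filter fun r => r ⬝ᵥ x = r ⬝ᵥ y)).trans ?_
  simp [rowcount x y hxy, ← pow_mul, mul_comm]









lemma cardSum_pos (n k : ℕ) : 1 ≤ cardSum n k := by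
  rw [cardSum]
  calc 1 = n.choose 0 := (Nat.choose_zero_right n).symm
  _ ≤ _ := Finset.single_le_sum (f := fun w => n.choose w) (fun _ _ => Nat.zero_le _)
      (Finset.mem_range.mpr (Nat.succ_pos k))

lemma cardSum_zero (k : ℕ) : cardSum 0 k = 1 := by
  rw [cardSum]
  rw [Finset.sum_eq_single 0]
  · simp
  · intro w _ hw
    exact Nat.choose_eq_zero_of_lt (Nat.pos_of_ne_zero hw)
  · simp

lemma key_lower (n k m : ℕ) :
    (cardSum n k : ℝ) / (2 ^ m + cardSum n k - 1) ≤ satProb n k m := by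
  set F : Finset (Fin n → ZMod 2) := univ.filter fun x => hammingNorm x ≤ k with hF
  set Z : Matrix (Fin m) (Fin n) (ZMod 2) × (Fin m → ZMod 2) → ℕ :=
    fun ab => (F.filter fun x => ab.1.mulVec x = ab.2).card with hZ
  set S : Finset (Matrix (Fin m) (Fin n) (ZMod 2) × (Fin m → ZMod 2)) :=
    univ.filter (cardXorSat n k m) with hS
  have hFc : F.card = cardSum n k := card_hamming_le n k
  -- sum of Z
  have sumZ : ∑ ab, (Z ab : ℝ) = (cardSum n k : ℝ) * 2 ^ (m * n) := by
    have : ∑ ab, Z ab = cardSum n k * 2 ^ (m * n) := by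
      calc ∑ ab, Z ab
          = ∑ ab : Matrix (Fin m) (Fin n) (ZMod 2) × (Fin m → ZMod 2),
            ∑ x ∈ F, if ab.1.mulVec x = ab.2 then 1 else 0 :=
            Finset.sum_congr rfl fun ab _ => Finset.card_filter _ _
        _ = ∑ x ∈ F, ∑ ab : Matrix (Fin m) (Fin n) (ZMod 2) × (Fin m → ZMod 2),
            if ab.1.mulVec x = ab.2 then 1 else 0 := Finset.sum_comm
        _ = ∑ x ∈ F, 2 ^ (m * n) := by
            refine Finset.sum_congr rfl fun x _ => ?_
            rw [← Finset.card_filter]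
            exact card_pair_single n m x
        _ = cardSum n k * 2 ^ (m * n) := by
            rw [Finset.sum_const, hFc, smul_eq_mul]
    exact_mod_cast congrArg (Nat.cast : ℕ → ℝ) this
  -- sum of Z^2
  have sumZsq : ∑ ab, (Z ab : ℝ) ^ 2
      = (cardSum n k : ℝ) * 2 ^ (m * n)
        + (cardSum n k : ℝ) * ((cardSum n k : ℝ) - 1) * 2 ^ (m * (n - 1)) := by
    calc ∑ ab, (Z ab : ℝ) ^ 2
        = ∑ ab : Matrix (Fin m) (Fin n) (ZMod 2) × (Fin m → ZMod 2),
          ∑ x ∈ F, ∑ y ∈ F, (if ab.1.mulVec x = ab.2 ∧ ab.1.mulVec y = ab.2 then (1:ℝ) else 0) := by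
          refine Finset.sum_congr rfl fun ab _ => ?_
          have : (Z ab : ℝ) = ∑ x ∈ F, if ab.1.mulVec x = ab.2 then (1:ℝ) else 0 := by
            rw [hZ]; push_cast [Finset.card_filter]; rfl
          rw [this, sq, Finset.sum_mul_sum]
          refine Finset.sum_congr rfl fun x _ => Finset.sum_congr rfl fun y _ => ?_
          by_cases h1 : ab.1.mulVec x = ab.2 <;> by_cases h2 : ab.1.mulVec y = ab.2 <;>
            simp [h1, h2]
      _ = ∑ x ∈ F, ∑ y ∈ F, ∑ ab : Matrix (Fin m) (Fin n) (ZMod 2) × (Fin m → ZMod 2),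
          (if ab.1.mulVec x = ab.2 ∧ ab.1.mulVec y = ab.2 then (1:ℝ) else 0) := by
          rw [Finset.sum_comm]
          exact Finset.sum_congr rfl fun x _ => Finset.sum_comm
      _ = ∑ x ∈ F, ∑ y ∈ F, (if x = y then ((2:ℝ) ^ (m * n)) else (2:ℝ) ^ (m * (n - 1))) := by
          refine Finset.sum_congr rfl fun x _ => Finset.sum_congr rfl fun y _ => ?_
          rw [Finset.sum_boole]
          by_cases hxy : x = y
          · subst hxy
            rw [if_pos rfl, show ((univ : Finset (Matrix (Fin m) (Fin n) (ZMod 2) × (Fin m → ZMod 2))).filter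
                fun ab => ab.1.mulVec x = ab.2 ∧ ab.1.mulVec x = ab.2)
              = (univ.filter fun ab => ab.1.mulVec x = ab.2) by simp]
            exact_mod_cast congrArg (Nat.cast : ℕ → ℝ) (card_pair_single n m x)
          · rw [if_neg hxy]
            exact_mod_cast congrArg (Nat.cast : ℕ → ℝ) (card_pair_two n m x y hxy)
      _ = ∑ x ∈ F, ∑ y ∈ F, ((2:ℝ) ^ (m * (n-1)) +
            (if x = y then ((2:ℝ) ^ (m * n)) - (2:ℝ) ^ (m * (n - 1)) else 0)) := by
          refine Finset.sum_congr rfl fun x _ => Finset.sum_congr rfl fun y _ => ?_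
          by_cases hxy : x = y <;> simp [hxy]
      _ = _ := by
          simp only [Finset.sum_add_distrib]
          simp only [Finset.sum_const, nsmul_eq_mul]
          have hrw : ∀ x ∈ F, (∑ y ∈ F, if x = y then ((2:ℝ) ^ (m*n) - 2 ^ (m*(n-1))) else 0)
              = (2:ℝ) ^ (m*n) - 2 ^ (m*(n-1)) := by
            intro x hx
            rw [Finset.sum_ite_eq]
            simp [hx]
          rw [Finset.sum_congr rfl hrw, Finset.sum_const, nsmul_eq_mul, hFc]
          ring
  -- Z vanishes off S
  have hZ0 : ∀ ab, ab ∉ S → Z ab = 0 := by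
    intro ab hab
    rw [hS, Finset.mem_filter] at hab
    push_neg at hab
    have hns := hab (Finset.mem_univ ab)
    rw [hZ]
    rw [Finset.card_eq_zero, Finset.filter_eq_empty_iff]
    intro x hx
    rw [hF, Finset.mem_filter] at hx
    exact fun hc => hns ⟨x, hx.2, hc⟩
  -- Cauchy-Schwarz
  have hCS : ((cardSum n k : ℝ) * 2 ^ (m * n)) ^ 2
      ≤ (S.card : ℝ) * (∑ ab, (Z ab : ℝ) ^ 2) := by
    have h1 : ∑ ab, (Z ab : ℝ) = ∑ ab ∈ S, (Z ab : ℝ) :=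
      (Finset.sum_subset (Finset.subset_univ S)
        (fun ab _ hab => by rw [hZ0 ab hab]; norm_num)).symm
    have h2 : (∑ ab ∈ S, (Z ab : ℝ)) ^ 2 ≤ (S.card : ℝ) * ∑ ab ∈ S, (Z ab : ℝ) ^ 2 :=
      sq_sum_le_card_mul_sum_sq
    have h3 : ∑ ab ∈ S, (Z ab : ℝ) ^ 2 ≤ ∑ ab, (Z ab : ℝ) ^ 2 :=
      Finset.sum_le_sum_of_subset_of_nonneg (Finset.subset_univ S)
        (fun ab _ _ => by positivity)
    calc ((cardSum n k : ℝ) * 2 ^ (m * n)) ^ 2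
        = (∑ ab ∈ S, (Z ab : ℝ)) ^ 2 := by rw [← h1, sumZ]
      _ ≤ (S.card : ℝ) * ∑ ab ∈ S, (Z ab : ℝ) ^ 2 := h2
      _ ≤ (S.card : ℝ) * ∑ ab, (Z ab : ℝ) ^ 2 := by
          exact mul_le_mul_of_nonneg_left h3 (Nat.cast_nonneg _)
  rw [sumZsq] at hCS
  -- satProb formula
  have hsat : satProb n k m = (S.card : ℝ) / ((2:ℝ) ^ (m * n) * 2 ^ m) := by
    rw [satProb, xorProb, hS]
    congr 1
    rw [Fintype.card_prod,
      show Fintype.card (Matrix (Fin m) (Fin n) (ZMod 2))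
        = Fintype.card (Fin m → Fin n → ZMod 2) from rfl]
    simp [Fintype.card_fun, ← pow_mul, mul_comm]
  rw [hsat]
  -- algebra
  set a : ℝ := (cardSum n k : ℝ) with ha
  have ha1 : 1 ≤ a := by rw [ha]; exact_mod_cast cardSum_pos n k
  set P : ℝ := (2:ℝ) ^ (m * n) with hP
  set c : ℝ := (2:ℝ) ^ (m * (n - 1)) with hc
  set Q : ℝ := (2:ℝ) ^ m with hQ
  have hPpos : 0 < P := by positivity
  have hcpos : 0 < c := by positivity
  have hQpos : 0 < Q := by positivity
  have hden : 0 < Q + a - 1 := by linarith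
  have hD : 0 < a * P + a * (a - 1) * c := by
    nlinarith [mul_nonneg (mul_nonneg (by linarith : (0:ℝ) ≤ a) (by linarith : (0:ℝ) ≤ a - 1))
      hcpos.le, mul_pos (by linarith : (0:ℝ) < a) hPpos]
  have aux : (a - 1) * (c * Q) ≤ (a - 1) * P := by
    rcases Nat.eq_zero_or_pos n with h0 | h1
    · have : a = 1 := by
        rw [ha, h0, cardSum_zero]; norm_num
      rw [this]; ring_nf; exact le_refl _
    · have : c * Q = P := by
        rw [hc, hQ, hP, ← pow_add]
        congr 1
        calc m * (n - 1) + m = m * ((n - 1) + 1) := by ring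
          _ = m * n := by congr 1; omega
      rw [this]
  have hScard : (0:ℝ) ≤ (S.card : ℝ) := Nat.cast_nonneg _
  rw [div_le_div_iff₀ hden (by positivity : (0:ℝ) < P * Q)]
  have h4 : a * (P * Q) * (a * P + a * (a - 1) * c) ≤ ((a * P) ^ 2) * (Q + a - 1) := by
    nlinarith [mul_le_mul_of_nonneg_left aux (show (0:ℝ) ≤ a ^ 2 * P by positivity)]
  have h5 : ((a * P) ^ 2) * (Q + a - 1)
      ≤ ((S.card : ℝ) * (Q + a - 1)) * (a * P + a * (a - 1) * c) := by
    nlinarith [mul_le_mul_of_nonneg_right hCS hden.le]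
  exact le_of_mul_le_mul_right (le_trans h4 h5) hD


lemma satProb_le_one (n k m : ℕ) : satProb n k m ≤ 1 := by
  rw [satProb, xorProb, div_le_one (by
    exact_mod_cast Nat.cast_pos.mpr Fintype.card_pos)]
  exact_mod_cast Finset.card_le_univ _

end Aux

theorem stmt2 (s : ℝ) (hs : 0 ≤ s) (k : ℕ → ℕ) (hk : ∀ n, k n ≤ n)
    (h : ∃ δ > (0 : ℝ), ∀ᶠ n : ℕ in atTop,
      s + δ ≤ (1 / n) * Real.logb 2 (cardSum n (k n))) :
    Tendsto (fun n : ℕ => satProb n (k n) ⌈s * n⌉₊) atTop (nhds 1) := by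
  obtain ⟨δ, hδ, hev⟩ := h
  set m : ℕ → ℕ := fun n => ⌈s * n⌉₊ with hm
  set Fr : ℕ → ℝ := fun n => (cardSum n (k n) : ℝ) with hFr
  set L : ℕ → ℝ := fun n => Fr n / (2 ^ (m n) + Fr n - 1) with hL
  set g : ℕ → ℝ := fun n => ((2:ℝ) ^ (m n) - 1) / Fr n with hg
  have hF1 : ∀ n, (1:ℝ) ≤ Fr n := fun n => by
    show (1:ℝ) ≤ ((cardSum n (k n) : ℕ) : ℝ)
    exact_mod_cast cardSum_pos n (k n)
  have h2m1 : ∀ n, (1:ℝ) ≤ (2:ℝ) ^ (m n) := fun n => one_le_pow₀ (by norm_num)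
  have hgle : ∀ᶠ n : ℕ in atTop, g n ≤ 2 * ((2:ℝ) ^ (-δ)) ^ n := by
    filter_upwards [hev, eventually_ge_atTop 1] with n hn hn1
    have hn0 : (0:ℝ) < n := by exact_mod_cast hn1
    rw [one_div, inv_mul_eq_div] at hn
    have hlogb : (s + δ) * n ≤ Real.logb 2 (Fr n) := (le_div_iff₀ hn0).mp hn
    have hFpos : (0:ℝ) < Fr n := lt_of_lt_of_le zero_lt_one (hF1 n)
    have hFlow : (2:ℝ) ^ ((s + δ) * n) ≤ Fr n := by
      calc (2:ℝ) ^ ((s + δ) * (n:ℝ)) ≤ (2:ℝ) ^ (Real.logb 2 (Fr n)) :=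
            Real.rpow_le_rpow_of_exponent_le one_le_two hlogb
        _ = Fr n := Real.rpow_logb two_pos (by norm_num) hFpos
    have hmle : ((m n : ℝ)) ≤ s * n + 1 :=
      (Nat.ceil_lt_add_one (by positivity : (0:ℝ) ≤ s * n)).le
    have h2mle : (2:ℝ) ^ (m n) ≤ (2:ℝ) ^ (s * (n:ℝ) + 1 : ℝ) := by
      rw [← Real.rpow_natCast 2 (m n)]
      exact Real.rpow_le_rpow_of_exponent_le one_le_two hmle
    have hstep : g n ≤ (2:ℝ) ^ (s * (n:ℝ) + 1 : ℝ) / (2:ℝ) ^ ((s + δ) * (n:ℝ)) := by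
      rw [hg]
      exact div_le_div₀ (by positivity) (by linarith) (by positivity) hFlow
    refine hstep.trans (le_of_eq ?_)
    rw [← Real.rpow_sub two_pos,
      show s * (n:ℝ) + 1 - (s + δ) * (n:ℝ) = 1 + (-δ * (n:ℝ)) by ring,
      Real.rpow_add two_pos, Real.rpow_one]
    congr 1
    rw [← Real.rpow_natCast ((2:ℝ) ^ (-δ)) n, ← Real.rpow_mul (by norm_num)]
  have hg0 : Tendsto g atTop (nhds 0) := by
    have hr0 : (0:ℝ) ≤ (2:ℝ) ^ (-δ) := Real.rpow_nonneg (by norm_num) _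
    have hr1 : (2:ℝ) ^ (-δ) < 1 :=
      Real.rpow_lt_one_of_one_lt_of_neg one_lt_two (by linarith)
    have hto : Tendsto (fun n : ℕ => 2 * ((2:ℝ) ^ (-δ)) ^ n) atTop (nhds 0) := by
      have := (tendsto_pow_atTop_nhds_zero_of_lt_one hr0 hr1).const_mul (2:ℝ)
      simpa using this
    refine tendsto_of_tendsto_of_tendsto_of_le_of_le' tendsto_const_nhds hto ?_ hgle
    filter_upwards with n
    exact div_nonneg (by linarith [h2m1 n]) (by linarith [hF1 n])
  have hLeq : ∀ n, L n = (1 + g n)⁻¹ := by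
    intro n
    have hFpos : (0:ℝ) < Fr n := lt_of_lt_of_le zero_lt_one (hF1 n)
    rw [hL, hg,
      show 1 + ((2:ℝ) ^ (m n) - 1) / Fr n = ((2:ℝ) ^ (m n) + Fr n - 1) / Fr n by
        field_simp; ring,
      inv_div]
  have hL1 : Tendsto L atTop (nhds 1) := by
    rw [funext hLeq]
    have h1 : Tendsto (fun n => 1 + g n) atTop (nhds 1) := by
      simpa using tendsto_const_nhds.add hg0
    simpa using h1.inv₀ (by norm_num)
  refine tendsto_of_tendsto_of_tendsto_of_le_of_le hL1 tendsto_const_nhds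
    (fun n => key_lower n (k n) (m n)) (fun n => satProb_le_one _ _ _)
end

section
/- Let s be a real number with 0 ≤ s < 1, and let (k_n) be a sequence of natural numbers with n ≤ 2·k_n and k_n ≤ n for all n. Then the probability that the random 1-CARD-XOR formula ψ(n, k_n, ⌈s·n⌉) is satisfiable tends to 1 as n → ∞. -/
open Finset Filter
open scoped Classical

/-!
Let `S` be the Hamming ball of radius `k`. As `n ≤ 2k`, the flip `x ↦ x + 1` maps the complement
of `S` into `S`, so `|S| ≥ 2^(n-1)`. Count the solutions `Z` of `A x = b` in `S`: its mean is
`μ = |S| / 2^m`, and because two distinct points solve a uniformly random system independently,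
`E[Z²] ≤ μ + μ²`. The second moment method gives `P(Z ≠ 0) ≥ 1 - 1/μ ≥ 1 - 2^(m+1-n)`, which
tends to `1` for `m = ⌈s n⌉` with `s < 1`.
-/

open Matrix

theorem card_filter_eq_and_eq {α β : Type*} [Fintype α] [Fintype β] (f g : α → β) :
    #{p : α × β | f p.1 = p.2 ∧ g p.1 = p.2} = #{a | f a = g a} := by
  refine card_nbij' Prod.fst (fun a => (a, f a)) ?_ ?_ ?_ ?_ <;> intro x <;> simp +contextual

theorem AddMonoidHom.card_ker_mul_card_of_surjective {G H : Type*} [AddGroup G] [Fintype G]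
    [AddMonoid H] [Fintype H] (f : G →+ H) (hf : Function.Surjective f) :
    #{g | f g = 0} * Fintype.card H = Fintype.card G :=
  calc #{g | f g = 0} * Fintype.card H = ∑ h : H, #{g | f g = h} := by
        rw [sum_congr rfl fun h _ => card_fiber_eq_of_mem_range f (hf h) (hf 0), sum_const,
          card_univ, smul_eq_mul, mul_comm]
    _ = Fintype.card G := (card_eq_sum_card_fiberwise (by simp)).symm

theorem Matrix.surjective_mulVec_of_ne_zero {K ι κ : Type*} [Field K] [Fintype κ]
    {z : κ → K} (hz : z ≠ 0) : Function.Surjective fun A : Matrix ι κ K => A *ᵥ z := by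
  obtain ⟨j, hj⟩ := Function.ne_iff.1 hz
  intro c
  refine ⟨vecMulVec c (Pi.single j (z j)⁻¹), ?_⟩
  simp [vecMulVec_mulVec, single_dotProduct, inv_mul_cancel₀ hj]

theorem Matrix.card_mulVec_eq_zero_mul {K ι κ : Type*} [Field K] [Fintype K] [Fintype ι]
    [DecidableEq ι] [Fintype κ] [DecidableEq κ] {z : κ → K} (hz : z ≠ 0) :
    #{A : Matrix ι κ K | A *ᵥ z = 0} * Fintype.card K ^ Fintype.card ι =
      Fintype.card (Matrix ι κ K) := by
  rw [← Fintype.card_fun]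
  simpa using (AddMonoidHom.mk' (fun A : Matrix ι κ K => A *ᵥ z) fun A B => add_mulVec A B z)
    |>.card_ker_mul_card_of_surjective (surjective_mulVec_of_ne_zero hz)

theorem sq_sum_le_card_filter_ne_zero_mul_sum_sq {Ω R : Type*} [Fintype Ω] [Field R]
    [LinearOrder R] [IsStrictOrderedRing R] (Z : Ω → R) :
    (∑ ω, Z ω) ^ 2 ≤ #{ω | Z ω ≠ 0} * ∑ ω, Z ω ^ 2 :=
  calc (∑ ω, Z ω) ^ 2 = (∑ ω ∈ {ω | Z ω ≠ 0}, Z ω) ^ 2 := by rw [sum_filter_ne_zero]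
    _ ≤ #{ω | Z ω ≠ 0} * ∑ ω ∈ {ω | Z ω ≠ 0}, Z ω ^ 2 := sq_sum_le_card_mul_sum_sq
    _ ≤ #{ω | Z ω ≠ 0} * ∑ ω, Z ω ^ 2 := by
        refine mul_le_mul_of_nonneg_left ?_ (Nat.cast_nonneg _)
        exact sum_le_sum_of_subset_of_nonneg (subset_univ _) fun _ _ _ => sq_nonneg _

/-- The second moment method, `μ` being the mean of `Z` under the uniform measure. -/
theorem one_sub_inv_le_card_filter_ne_zero_div_card {Ω : Type*} [Fintype Ω] [Nonempty Ω]
    (Z : Ω → ℝ) {μ : ℝ} (hμ : 0 < μ) (h1 : ∑ ω, Z ω = μ * Fintype.card Ω)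
    (h2 : ∑ ω, Z ω ^ 2 ≤ (μ + μ ^ 2) * Fintype.card Ω) :
    1 - μ⁻¹ ≤ #{ω | Z ω ≠ 0} / Fintype.card Ω := by
  set T : ℝ := (Fintype.card Ω : ℝ)
  set F : ℝ := (#{ω | Z ω ≠ 0} : ℝ)
  have hT : 0 < T := by positivity
  have hF : 0 ≤ F := by positivity
  have hCS : (μ * T) * (μ * T) ≤ (F * (1 + μ)) * (μ * T) := by
    have := sq_sum_le_card_filter_ne_zero_mul_sum_sq Z
    rw [h1] at this
    nlinarith [mul_le_mul_of_nonneg_left h2 hF]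
  have hlow : μ * T ≤ F * (1 + μ) := le_of_mul_le_mul_right hCS (by positivity)
  rw [le_div_iff₀ hT, sub_mul, inv_mul_eq_div, sub_le_iff_le_add, ← sub_le_iff_le_add',
    le_div_iff₀ hμ]
  nlinarith

theorem hammingNorm_add_one_add_hammingNorm {ι : Type*} [Fintype ι] (x : ι → ZMod 2) :
    hammingNorm (x + 1) + hammingNorm x = Fintype.card ι := by
  have hflip : ∀ a : ZMod 2, a + 1 ≠ 0 ↔ a = 0 := by decide
  simp only [hammingNorm, Pi.add_apply, Pi.one_apply, hflip]
  exact card_filter_add_card_filter_not _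

theorem two_pow_le_two_mul_card_hammingNorm_le {ι : Type*} [Fintype ι] [DecidableEq ι] {k : ℕ}
    (hk : Fintype.card ι ≤ 2 * k) :
    2 ^ Fintype.card ι ≤ 2 * #{x : ι → ZMod 2 | hammingNorm x ≤ k} := by
  have hcompl :
      #{x : ι → ZMod 2 | ¬ hammingNorm x ≤ k} ≤ #{x : ι → ZMod 2 | hammingNorm x ≤ k} := by
    refine card_le_card_of_injOn (· + 1) (fun x hx => ?_) (add_left_injective 1).injOn
    simp only [coe_filter, mem_univ, true_and, Set.mem_ofPred_eq] at hx ⊢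
    have := hammingNorm_add_one_add_hammingNorm x
    omega
  have htotal :=
    card_filter_add_card_filter_not (s := univ) (fun x : ι → ZMod 2 => hammingNorm x ≤ k)
  rw [card_univ, Fintype.card_fun, ZMod.card] at htotal
  omega

section RandomLinearSystem

variable {K ι κ : Type*} [Field K] [Fintype K] [Fintype ι] [DecidableEq ι] [Fintype κ]
  [DecidableEq κ]

theorem sum_card_filter_mulVec_eq (S : Finset (κ → K)) :
    ∑ ab : Matrix ι κ K × (ι → K), #{x ∈ S | ab.1 *ᵥ x = ab.2} =
      #S * Fintype.card (Matrix ι κ K) :=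
  calc ∑ ab : Matrix ι κ K × (ι → K), #{x ∈ S | ab.1 *ᵥ x = ab.2}
      = ∑ x ∈ S, #{ab : Matrix ι κ K × (ι → K) | ab.1 *ᵥ x = ab.2} := by
        simp only [card_filter]
        exact sum_comm
    _ = ∑ x ∈ S, Fintype.card (Matrix ι κ K) :=
        sum_congr rfl fun x _ => by
          simpa using card_filter_eq_and_eq (fun A : Matrix ι κ K => A *ᵥ x) (· *ᵥ x)
    _ = #S * Fintype.card (Matrix ι κ K) := by rw [sum_const, smul_eq_mul]

theorem card_mulVec_eq_mulVec_mul {x y : κ → K} (hxy : x ≠ y) :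
    #{A : Matrix ι κ K | A *ᵥ x = A *ᵥ y} * Fintype.card K ^ Fintype.card ι =
      Fintype.card (Matrix ι κ K) := by
  rw [← card_mulVec_eq_zero_mul (ι := ι) (sub_ne_zero.2 hxy)]
  congr 2
  ext A
  simp only [mem_filter, mem_univ, true_and, mulVec_sub, sub_eq_zero]

theorem card_pow_mul_sum_card_filter_mulVec_sq_le (S : Finset (κ → K)) :
    Fintype.card K ^ Fintype.card ι *
        ∑ ab : Matrix ι κ K × (ι → K), #{x ∈ S | ab.1 *ᵥ x = ab.2} ^ 2 ≤
      #S * (Fintype.card K ^ Fintype.card ι + #S) * Fintype.card (Matrix ι κ K) := by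
  set q := Fintype.card K ^ Fintype.card ι
  set N := Fintype.card (Matrix ι κ K)
  have hsq : ∀ ab : Matrix ι κ K × (ι → K), #{x ∈ S | ab.1 *ᵥ x = ab.2} ^ 2 =
      #{p ∈ S ×ˢ S | ab.1 *ᵥ p.1 = ab.2 ∧ ab.1 *ᵥ p.2 = ab.2} := fun ab => by
    rw [sq, ← card_product]
    congr 1
    ext p
    simp only [mem_product, mem_filter]
    tauto
  have hpair : ∀ p : (κ → K) × (κ → K),
      q * #{A : Matrix ι κ K | A *ᵥ p.1 = A *ᵥ p.2} ≤
        (if p.1 = p.2 then q * N else 0) + N := by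
    rintro ⟨x, y⟩
    by_cases hxy : x = y
    · simp [hxy, N]
    · simpa [hxy, mul_comm q] using (card_mulVec_eq_mulVec_mul (ι := ι) hxy).le
  calc q * ∑ ab : Matrix ι κ K × (ι → K), #{x ∈ S | ab.1 *ᵥ x = ab.2} ^ 2
      = q * ∑ p ∈ S ×ˢ S,
          #{ab : Matrix ι κ K × (ι → K) | ab.1 *ᵥ p.1 = ab.2 ∧ ab.1 *ᵥ p.2 = ab.2} := by
        rw [sum_congr rfl fun ab _ => hsq ab]
        simp only [card_filter]
        rw [sum_comm]
    _ = ∑ p ∈ S ×ˢ S, q * #{A : Matrix ι κ K | A *ᵥ p.1 = A *ᵥ p.2} := by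
        rw [mul_sum]
        exact sum_congr rfl fun p _ => by
          congr 1
          convert card_filter_eq_and_eq (fun A : Matrix ι κ K => A *ᵥ p.1) (· *ᵥ p.2)
    _ ≤ ∑ p ∈ S ×ˢ S, ((if p.1 = p.2 then q * N else 0) + N) :=
        sum_le_sum fun p _ => hpair p
    _ = #S * (q + #S) * N := by
        rw [sum_add_distrib, sum_product, sum_const, card_product]
        simp only [sum_ite_eq, sum_ite_mem, inter_self, sum_const, smul_eq_mul]
        ring

theorem one_sub_div_le_card_filter_exists_mulVec_eq_div {S : Finset (κ → K)} (hS : S.Nonempty) :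
    1 - (Fintype.card K ^ Fintype.card ι : ℝ) / #S ≤
      #{ab : Matrix ι κ K × (ι → K) | ∃ x ∈ S, ab.1 *ᵥ x = ab.2} /
        Fintype.card (Matrix ι κ K × (ι → K)) := by
  have hq : (0 : ℝ) < Fintype.card K ^ Fintype.card ι := by positivity
  have hS' : (0 : ℝ) < #S := by exact_mod_cast hS.card_pos
  have hcard : (Fintype.card (Matrix ι κ K × (ι → K)) : ℝ) =
      Fintype.card (Matrix ι κ K) * Fintype.card K ^ Fintype.card ι := by
    simp [Fintype.card_prod]
  have key := one_sub_inv_le_card_filter_ne_zero_div_card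
    (fun ab : Matrix ι κ K × (ι → K) => (#{x ∈ S | ab.1 *ᵥ x = ab.2} : ℝ))
    (μ := #S / Fintype.card K ^ Fintype.card ι) (by positivity) ?_ ?_
  · rw [inv_div] at key
    convert key using 4
    simp
  · rw [hcard, ← Nat.cast_sum, sum_card_filter_mulVec_eq]
    push_cast
    field_simp
  · have h2 : (Fintype.card K ^ Fintype.card ι : ℝ) *
        ∑ ab : Matrix ι κ K × (ι → K), (#{x ∈ S | ab.1 *ᵥ x = ab.2} : ℝ) ^ 2 ≤
          #S * (Fintype.card K ^ Fintype.card ι + #S) * Fintype.card (Matrix ι κ K) := by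
      exact_mod_cast card_pow_mul_sum_card_filter_mulVec_sq_le S
    rw [hcard]
    refine ((le_div_iff₀' hq).2 h2).trans_eq ?_
    field_simp

end RandomLinearSystem

theorem xorProb_le_one (n m : ℕ)
    (P : Matrix (Fin m) (Fin n) (ZMod 2) × (Fin m → ZMod 2) → Prop) :
    xorProb n m P ≤ 1 :=
  div_le_one_of_le₀ (by exact_mod_cast card_filter_le _ _) (Nat.cast_nonneg _)

theorem one_sub_two_pow_div_le_satProb {n k : ℕ} (m : ℕ) (hk : n ≤ 2 * k) :
    1 - (2 : ℝ) ^ (m + 1) / 2 ^ n ≤ satProb n k m := by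
  have hball := two_pow_le_two_mul_card_hammingNorm_le (ι := Fin n) (k := k) (by simpa using hk)
  rw [Fintype.card_fin] at hball
  have hS : ({x | hammingNorm x ≤ k} : Finset (Fin n → ZMod 2)).Nonempty := ⟨0, by simp⟩
  have key := one_sub_div_le_card_filter_exists_mulVec_eq_div (ι := Fin m) hS
  simp only [ZMod.card, Fintype.card_fin, Nat.cast_ofNat] at key
  calc 1 - (2 : ℝ) ^ (m + 1) / 2 ^ n
      ≤ 1 - 2 ^ m / #{x : Fin n → ZMod 2 | hammingNorm x ≤ k} := by
        gcongr 1 - ?_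
        rw [div_le_div_iff₀ (by exact_mod_cast hS.card_pos) (by positivity), pow_succ]
        have : (2 : ℝ) ^ n ≤ 2 * #{x : Fin n → ZMod 2 | hammingNorm x ≤ k} := by
          exact_mod_cast hball
        nlinarith [pow_pos (two_pos (α := ℝ)) m]
    _ ≤ _ := key
    _ = satProb n k m := by
        unfold satProb xorProb
        congr
        ext
        simp [cardXorSat]

theorem tendsto_two_pow_ceil_mul_add_one_div_two_pow {s : ℝ} (hs0 : 0 ≤ s) (hs1 : s < 1) :
    Tendsto (fun n : ℕ => (2 : ℝ) ^ (⌈s * n⌉₊ + 1) / 2 ^ n) atTop (nhds 0) := by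
  have hr : Tendsto (fun n : ℕ => 4 * ((2 : ℝ) ^ (s - 1)) ^ n) atTop (nhds 0) := by
    simpa using (tendsto_pow_atTop_nhds_zero_of_lt_one (by positivity)
      (Real.rpow_lt_one_of_one_lt_of_neg one_lt_two (by linarith))).const_mul 4
  refine squeeze_zero (fun n => by positivity) (fun n => ?_) hr
  have hceil : (⌈s * n⌉₊ : ℝ) < s * n + 1 := Nat.ceil_lt_add_one (by positivity)
  rw [div_le_iff₀ (by positivity), ← Real.rpow_natCast ((2 : ℝ) ^ (s - 1)) n,
    ← Real.rpow_mul zero_le_two, ← Real.rpow_natCast 2 n,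
    ← Real.rpow_natCast 2 (⌈s * n⌉₊ + 1)]
  calc (2 : ℝ) ^ ((⌈s * n⌉₊ + 1 : ℕ) : ℝ) ≤ 2 ^ (2 + ((s - 1) * n + n)) :=
        Real.rpow_le_rpow_of_exponent_le one_le_two (by push_cast; linarith)
    _ = 4 * 2 ^ ((s - 1) * n) * 2 ^ (n : ℝ) := by
        rw [Real.rpow_add two_pos, Real.rpow_add two_pos]
        norm_num [mul_assoc]

theorem stmt5_general (s : ℝ) (hs0 : 0 ≤ s) (hs1 : s < 1) (k : ℕ → ℕ)
    (hk1 : ∀ n, n ≤ 2 * k n) :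
    Tendsto (fun n : ℕ => satProb n (k n) ⌈s * n⌉₊) atTop (nhds 1) := by
  have hlower :
      Tendsto (fun n : ℕ => 1 - (2 : ℝ) ^ (⌈s * n⌉₊ + 1) / 2 ^ n) atTop (nhds 1) := by
    simpa using (tendsto_two_pow_ceil_mul_add_one_div_two_pow hs0 hs1).const_sub 1
  exact tendsto_of_tendsto_of_tendsto_of_le_of_le hlower tendsto_const_nhds
    (fun n => one_sub_two_pow_div_le_satProb _ (hk1 n)) (fun _ => xorProb_le_one _ _ _)

theorem stmt5 (s : ℝ) (hs0 : 0 ≤ s) (hs1 : s < 1) (k : ℕ → ℕ)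
    (hk1 : ∀ n, n ≤ 2 * k n) (hk2 : ∀ n, k n ≤ n) :
    Tendsto (fun n : ℕ => satProb n (k n) ⌈s * n⌉₊) atTop (nhds 1) :=
  stmt5_general s hs0 hs1 k hk1
end

section
/- Let s be a real number with s > 1, and let (k_n) be a sequence of natural numbers with n ≤ 2·k_n and k_n ≤ n for all n. Then the probability that the random 1-CARD-XOR formula ψ(n, k_n, ⌈s·n⌉) is unsatisfiable tends to 1 as n → ∞. -/
open Finset Filter
open scoped Classical

lemma slice_card (n m : ℕ) (x : Fin n → ZMod 2) :
    (Finset.univ.filter (fun ab : Matrix (Fin m) (Fin n) (ZMod 2) × (Fin m → ZMod 2) =>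
      ab.1.mulVec x = ab.2)).card = Fintype.card (Matrix (Fin m) (Fin n) (ZMod 2)) := by
  rw [← Finset.card_univ]
  apply Finset.card_bij' (fun ab _ => ab.1) (fun A _ => (A, A.mulVec x))
  · intro ab hab
    simp only [mem_filter, mem_univ, true_and] at hab
    exact Prod.ext rfl hab
  · intro A _; rfl
  · intro ab _; exact mem_univ _
  · intro A _
    simp [mem_filter]

lemma sat_count_le (n k m : ℕ) :
    ((Finset.univ.filter (cardXorSat n k m)).card : ℝ) ≤
      2 ^ n * Fintype.card (Matrix (Fin m) (Fin n) (ZMod 2)) := by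
  have h : (Finset.univ.filter (cardXorSat n k m)) ⊆
      Finset.univ.biUnion (fun x : Fin n → ZMod 2 =>
        Finset.univ.filter (fun ab => ab.1.mulVec x = ab.2)) := by
    intro ab hab
    simp only [mem_filter, mem_univ, true_and, cardXorSat] at hab
    obtain ⟨x, _, hx⟩ := hab
    simp only [mem_biUnion, mem_univ, mem_filter, true_and]
    exact ⟨x, hx⟩
  have := Finset.card_le_card h
  have h2 := Finset.card_biUnion_le (s := (Finset.univ : Finset (Fin n → ZMod 2)))
    (t := fun x => Finset.univ.filter
      (fun ab : Matrix (Fin m) (Fin n) (ZMod 2) × (Fin m → ZMod 2) => ab.1.mulVec x = ab.2))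
  have h3 : ∑ x : Fin n → ZMod 2, (Finset.univ.filter
      (fun ab : Matrix (Fin m) (Fin n) (ZMod 2) × (Fin m → ZMod 2) =>
        ab.1.mulVec x = ab.2)).card
      = 2 ^ n * Fintype.card (Matrix (Fin m) (Fin n) (ZMod 2)) := by
    simp only [slice_card, Finset.sum_const, Finset.card_univ, smul_eq_mul]
    congr 1
    simp [Fintype.card_fun]
  have hfin : (Finset.univ.filter (cardXorSat n k m)).card ≤
      2 ^ n * Fintype.card (Matrix (Fin m) (Fin n) (ZMod 2)) :=
    le_trans (Finset.card_le_card h) (le_trans Finset.card_biUnion_le (le_of_eq h3))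
  exact_mod_cast hfin

lemma total_card (n m : ℕ) :
    (Fintype.card (Matrix (Fin m) (Fin n) (ZMod 2) × (Fin m → ZMod 2)) : ℝ)
      = Fintype.card (Matrix (Fin m) (Fin n) (ZMod 2)) * 2 ^ m := by
  simp [Fintype.card_prod, Fintype.card_fun]

lemma satProb_le (n k m : ℕ) : satProb n k m ≤ 2 ^ n / 2 ^ m := by
  have hM : (0:ℝ) < Fintype.card (Matrix (Fin m) (Fin n) (ZMod 2)) := by
    exact_mod_cast Fintype.card_pos
  have h2 : (0:ℝ) < 2 ^ m := by positivity
  rw [satProb, xorProb, total_card]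
  rw [div_le_div_iff₀ (by positivity) (by positivity)]
  calc ((Finset.univ.filter (cardXorSat n k m)).card : ℝ) * 2 ^ m
      ≤ (2 ^ n * Fintype.card (Matrix (Fin m) (Fin n) (ZMod 2))) * 2 ^ m := by
        exact mul_le_mul_of_nonneg_right (sat_count_le n k m) (le_of_lt h2)
    _ = 2 ^ n * (Fintype.card (Matrix (Fin m) (Fin n) (ZMod 2)) * 2 ^ m) := by ring

lemma satProb_nonneg (n k m : ℕ) : 0 ≤ satProb n k m := by
  rw [satProb, xorProb]; positivity

lemma unsat_eq (n k m : ℕ) : unsatProb n k m = 1 - satProb n k m := by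
  have hT : (0:ℝ) < Fintype.card (Matrix (Fin m) (Fin n) (ZMod 2) × (Fin m → ZMod 2)) := by
    exact_mod_cast Fintype.card_pos
  rw [unsatProb, satProb, xorProb, xorProb, eq_sub_iff_add_eq, ← add_div,
    div_eq_one_iff_eq hT.ne']
  have := Finset.card_filter_add_card_filter_not
    (s := (Finset.univ : Finset (Matrix (Fin m) (Fin n) (ZMod 2) × (Fin m → ZMod 2))))
    (p := cardXorSat n k m)
  rw [Finset.card_univ] at this
  rw [add_comm]
  norm_cast
  convert this using 3
  exact Finset.filter_congr_decidable _ _ _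

theorem stmt7 (s : ℝ) (hs : 1 < s) (k : ℕ → ℕ)
    (hk1 : ∀ n, n ≤ 2 * k n) (hk2 : ∀ n, k n ≤ n) :
    Tendsto (fun n : ℕ => unsatProb n (k n) ⌈s * n⌉₊) atTop (nhds 1) := by
  have hbase0 : (0:ℝ) ≤ (2:ℝ) ^ (1 - s) := Real.rpow_nonneg (by norm_num) _
  have hbase1 : (2:ℝ) ^ (1 - s) < 1 :=
    Real.rpow_lt_one_of_one_lt_of_neg one_lt_two (by linarith)
  have hsat : Tendsto (fun n : ℕ => satProb n (k n) ⌈s * n⌉₊) atTop (nhds 0) := by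
    apply squeeze_zero (fun n => satProb_nonneg _ _ _)
      (g := fun n : ℕ => ((2:ℝ) ^ (1 - s)) ^ n)
    · intro n
      set m : ℕ := ⌈s * n⌉₊ with hm
      have hmn : s * n ≤ (m : ℝ) := Nat.le_ceil _
      have h1 : satProb n (k n) m ≤ 2 ^ n / 2 ^ m := satProb_le n (k n) m
      have h2 : (2:ℝ) ^ n / 2 ^ m = (2:ℝ) ^ ((n:ℝ) - (m:ℝ)) := by
        rw [Real.rpow_sub (by norm_num), Real.rpow_natCast, Real.rpow_natCast]
      have h3 : (2:ℝ) ^ ((n:ℝ) - (m:ℝ)) ≤ (2:ℝ) ^ ((1 - s) * (n:ℝ)) := by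
        apply Real.rpow_le_rpow_of_exponent_le one_le_two
        nlinarith
      have h4 : (2:ℝ) ^ ((1 - s) * (n:ℝ)) = ((2:ℝ) ^ (1 - s)) ^ n := by
        rw [Real.rpow_mul (by norm_num), Real.rpow_natCast]
      calc satProb n (k n) m ≤ 2 ^ n / 2 ^ m := h1
        _ = (2:ℝ) ^ ((n:ℝ) - (m:ℝ)) := h2
        _ ≤ (2:ℝ) ^ ((1 - s) * (n:ℝ)) := h3
        _ = ((2:ℝ) ^ (1 - s)) ^ n := h4
    · exact tendsto_pow_atTop_nhds_zero_of_lt_one hbase0 hbase1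
  simp only [unsat_eq]
  have := hsat.const_sub 1
  simpa using this
end

section
/- For all natural numbers n ≥ 1 and k with 1 ≤ k and 2·k ≤ n, the sum ∑_{w=0}^{k} C(n,w) of binomial coefficients is at least 2^(n·H(k/n)) / (8·k·(1 - k/n)). -/
open Finset Filter
open scoped Classical

section Aux
open Real Nat Stirling Filter

lemma sqrt_pi_le_stirlingSeq (i : ℕ) : Real.sqrt π ≤ stirlingSeq (i + 1) :=
  stirlingSeq'_antitone.le_of_tendsto
    (tendsto_stirlingSeq_sqrt_pi.comp (tendsto_add_atTop_nat 1)) i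

lemma fact_ge (j : ℕ) (hj : 1 ≤ j) :
    Real.sqrt π * (Real.sqrt (2*j) * ((j:ℝ)/Real.exp 1)^j) ≤ (j ! : ℝ) := by
  obtain ⟨i, rfl⟩ := Nat.exists_eq_add_of_le hj
  have h1 : Real.sqrt π ≤ stirlingSeq (1 + i) := by
    rw [Nat.add_comm]; exact sqrt_pi_le_stirlingSeq i
  have hd : (0:ℝ) < Real.sqrt (2*(1+i:ℕ)) * (((1+i:ℕ):ℝ)/Real.exp 1)^(1+i) := by
    positivity
  rw [stirlingSeq, le_div_iff₀ hd] at h1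
  exact h1

lemma fact_le (j : ℕ) (hj : 1 ≤ j) :
    (j ! : ℝ) ≤ (Real.exp 1 / Real.sqrt 2) * (Real.sqrt (2*j) * ((j:ℝ)/Real.exp 1)^j) := by
  obtain ⟨i, rfl⟩ := Nat.exists_eq_add_of_le hj
  have h1 : stirlingSeq (1 + i) ≤ stirlingSeq (0 + 1) := by
    rw [Nat.add_comm 1 i]
    exact stirlingSeq'_antitone (Nat.zero_le i)
  rw [Nat.zero_add, stirlingSeq_one] at h1
  have hd : (0:ℝ) < Real.sqrt (2*(1+i:ℕ)) * (((1+i:ℕ):ℝ)/Real.exp 1)^(1+i) := by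
    positivity
  rw [stirlingSeq, div_le_iff₀ hd] at h1
  exact h1

lemma exp_four_le : Real.exp 1 ^ 4 ≤ 55 := by
  have h := Real.exp_one_lt_d9
  have h0 := (Real.exp_pos 1).le
  calc Real.exp 1 ^ 4 ≤ 2.7182818286 ^ 4 := pow_le_pow_left₀ h0 h.le 4
    _ ≤ 55 := by norm_num

lemma core (K M : ℝ) (hK1 : 1 ≤ K) (hKM : K ≤ M) :
    (K + M) * ((Real.exp 1/Real.sqrt 2) * (Real.exp 1/Real.sqrt 2) *
      (Real.sqrt (2*K) * Real.sqrt (2*M))) ≤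
    8 * (K*M) * (Real.sqrt π * Real.sqrt (2*(K+M))) := by
  have hKpos : (0:ℝ) < K := lt_of_lt_of_le one_pos hK1
  have hMpos : (0:ℝ) < M := lt_of_lt_of_le hKpos hKM
  have hNpos : (0:ℝ) < K + M := by positivity
  have h1 : Real.sqrt (2*K) ^ 2 = 2*K := Real.sq_sqrt (by positivity)
  have h2 : Real.sqrt (2*M) ^ 2 = 2*M := Real.sq_sqrt (by positivity)
  have h3 : Real.sqrt (2*(K+M)) ^ 2 = 2*(K+M) := Real.sq_sqrt (by positivity)
  have h4 : Real.sqrt π ^ 2 = π := Real.sq_sqrt Real.pi_pos.le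
  have hepos : (0:ℝ) < Real.exp 1 := Real.exp_pos 1
  have hedivsq : (Real.exp 1 / Real.sqrt 2) * (Real.exp 1 / Real.sqrt 2)
      = Real.exp 1 ^ 2 / 2 := by
    rw [_root_.div_mul_div_comm, Real.mul_self_sqrt (by norm_num : (0:ℝ) ≤ 2)]; ring
  have hpi : (3.14:ℝ) < π := Real.pi_gt_d2
  rw [hedivsq]
  have ha : (0:ℝ) ≤ (K+M) * (Real.exp 1^2/2 * (Real.sqrt (2*K) * Real.sqrt (2*M))) := by
    positivity
  have hb : (0:ℝ) ≤ 8 * (K*M) * (Real.sqrt π * Real.sqrt (2*(K+M))) := by positivity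
  have hsq : ((K+M) * (Real.exp 1^2/2 * (Real.sqrt (2*K) * Real.sqrt (2*M))))^2 ≤
      (8 * (K*M) * (Real.sqrt π * Real.sqrt (2*(K+M))))^2 := by
    have ea : ((K+M) * (Real.exp 1^2/2 * (Real.sqrt (2*K) * Real.sqrt (2*M))))^2
        = (K+M)*(Real.exp 1^2*Real.exp 1^2)*((K+M)*(K*M)) := by
      simp only [mul_pow]; rw [h1, h2]; ring
    have eb : (8 * (K*M) * (Real.sqrt π * Real.sqrt (2*(K+M))))^2
        = 128 * π * ((K*M)^2*(K+M)) := by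
      simp only [mul_pow]; rw [h4, h3]; ring
    rw [ea, eb]
    have he4 : Real.exp 1^2*Real.exp 1^2 ≤ 55 := by
      have h55 := exp_four_le
      nlinarith [sq_nonneg (Real.exp 1)]
    have hNle : K + M ≤ 2*(K*M) := by nlinarith
    have t1 : (K+M) * (Real.exp 1^2*Real.exp 1^2) ≤ 2*(K*M)*55 :=
      mul_le_mul hNle he4 (by positivity) (by positivity)
    have t2 : (110:ℝ) ≤ 128*π := by nlinarith
    calc (K+M)*(Real.exp 1^2*Real.exp 1^2)*((K+M)*(K*M))
        ≤ 2*(K*M)*55*((K+M)*(K*M)) :=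
          mul_le_mul_of_nonneg_right t1 (by positivity)
      _ = 110*((K*M)^2*(K+M)) := by ring
      _ ≤ 128*π*((K*M)^2*(K+M)) :=
          mul_le_mul_of_nonneg_right t2 (by positivity)
  calc (K+M) * (Real.exp 1^2/2 * (Real.sqrt (2*K) * Real.sqrt (2*M)))
      = Real.sqrt (((K+M) * (Real.exp 1^2/2 * (Real.sqrt (2*K) * Real.sqrt (2*M))))^2) :=
        (Real.sqrt_sq ha).symm
    _ ≤ Real.sqrt ((8 * (K*M) * (Real.sqrt π * Real.sqrt (2*(K+M))))^2) :=
        Real.sqrt_le_sqrt hsq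
    _ = 8 * (K*M) * (Real.sqrt π * Real.sqrt (2*(K+M))) := Real.sqrt_sq hb

lemma key (k m : ℕ) (hk : 1 ≤ k) (hkm : k ≤ m) :
    ((k+m:ℕ):ℝ)^(k+m+1) * ((k ! : ℝ) * (m ! : ℝ)) ≤
      8 * ((k:ℝ)^(k+1) * (m:ℝ)^(m+1)) * ((k+m)! : ℝ) := by
  have hm : 1 ≤ m := le_trans hk hkm
  have hK1 : (1:ℝ) ≤ (k:ℝ) := by exact_mod_cast hk
  have hKM : (k:ℝ) ≤ (m:ℝ) := by exact_mod_cast hkm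
  have hKpos : (0:ℝ) < (k:ℝ) := lt_of_lt_of_le one_pos hK1
  have hMpos : (0:ℝ) < (m:ℝ) := lt_of_lt_of_le hKpos hKM
  have hfk := fact_le k hk
  have hfm := fact_le m hm
  have hfn := fact_ge (k+m) (by omega)
  have hcore := core (k:ℝ) (m:ℝ) hK1 hKM
  push_cast at hfn ⊢
  calc ((k:ℝ)+(m:ℝ))^(k+m+1) * ((k ! : ℝ) * (m ! : ℝ))
      ≤ ((k:ℝ)+(m:ℝ))^(k+m+1) *
        (((Real.exp 1/Real.sqrt 2) * (Real.sqrt (2*(k:ℝ)) * ((k:ℝ)/Real.exp 1)^k)) *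
         ((Real.exp 1/Real.sqrt 2) * (Real.sqrt (2*(m:ℝ)) * ((m:ℝ)/Real.exp 1)^m))) := by
        have hp : (0:ℝ) ≤ ((k:ℝ)+(m:ℝ))^(k+m+1) := by positivity
        exact mul_le_mul_of_nonneg_left
          (mul_le_mul hfk hfm (Nat.cast_nonneg _) (by positivity)) hp
    _ = (((k:ℝ)+(m:ℝ)) * ((Real.exp 1/Real.sqrt 2) * (Real.exp 1/Real.sqrt 2) *
        (Real.sqrt (2*(k:ℝ)) * Real.sqrt (2*(m:ℝ))))) *
        (((k:ℝ)+(m:ℝ))^(k+m) * ((k:ℝ)/Real.exp 1)^k * ((m:ℝ)/Real.exp 1)^m) := by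
        ring
    _ ≤ (8 * ((k:ℝ)*(m:ℝ)) * (Real.sqrt π * Real.sqrt (2*((k:ℝ)+(m:ℝ))))) *
        (((k:ℝ)+(m:ℝ))^(k+m) * ((k:ℝ)/Real.exp 1)^k * ((m:ℝ)/Real.exp 1)^m) := by
        exact mul_le_mul_of_nonneg_right hcore (by positivity)
    _ = 8 * ((k:ℝ)^(k+1) * (m:ℝ)^(m+1)) *
        (Real.sqrt π * (Real.sqrt (2*((k:ℝ)+(m:ℝ))) * (((k:ℝ)+(m:ℝ))/Real.exp 1)^(k+m))) := by
        rw [div_pow, div_pow, div_pow, pow_add]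
        field_simp
        ring_nf
    _ ≤ 8 * ((k:ℝ)^(k+1) * (m:ℝ)^(m+1)) * ((k+m)! : ℝ) := by
        exact mul_le_mul_of_nonneg_left hfn (by positivity)


theorem stmt10 (n k : ℕ) (hn : 1 ≤ n) (hk : 1 ≤ k) (hkn : 2 * k ≤ n) :
    (2 : ℝ) ^ ((n : ℝ) * binEnt ((k : ℝ) / n)) / (8 * (k : ℝ) * (1 - (k : ℝ) / n)) ≤
      (cardSum n k : ℝ) := by
  obtain ⟨m, rfl⟩ := Nat.exists_eq_add_of_le (show k ≤ n by omega)
  have hm : k ≤ m := by omega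
  have hm1 : 1 ≤ m := le_trans hk hm
  have hKpos : (0:ℝ) < (k:ℝ) := by exact_mod_cast hk
  have hMpos : (0:ℝ) < (m:ℝ) := by exact_mod_cast hm1
  have hNpos : (0:ℝ) < ((k+m:ℕ):ℝ) := by positivity
  have h1 : 1 - (k:ℝ)/((k+m:ℕ):ℝ) = (m:ℝ)/((k+m:ℕ):ℝ) := by
    push_cast
    field_simp
    ring
  have hent : ((k+m:ℕ):ℝ) * binEnt ((k:ℝ)/((k+m:ℕ):ℝ)) =
      Real.logb 2 (((k+m:ℕ):ℝ)^(k+m) / ((k:ℝ)^k * (m:ℝ)^m)) := by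
    rw [binEnt, h1]
    rw [Real.logb_div (ne_of_gt hKpos) (ne_of_gt hNpos),
        Real.logb_div (ne_of_gt hMpos) (ne_of_gt hNpos),
        Real.logb_div (by positivity) (by positivity),
        Real.logb_mul (by positivity) (by positivity),
        Real.logb_pow, Real.logb_pow, Real.logb_pow]
    push_cast
    field_simp
    ring
  rw [hent, Real.rpow_logb (by norm_num) (by norm_num) (by positivity), h1]
  have hchoose : (((k+m).choose k : ℕ):ℝ) ≤ ((cardSum (k+m) k : ℕ):ℝ) := by
    have h : (k+m).choose k ≤ cardSum (k+m) k :=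
      Finset.single_le_sum (f := fun w => (k+m).choose w)
        (fun i _ => Nat.zero_le _) (Finset.self_mem_range_succ k)
    exact_mod_cast h
  have hfacteq : ((k+m)! : ℝ) = (((k+m).choose k : ℕ):ℝ) * (k ! : ℝ) * (m ! : ℝ) := by
    have h := Nat.choose_mul_factorial_mul_factorial (Nat.le_add_right k m)
    rw [Nat.add_sub_cancel_left] at h
    exact_mod_cast h.symm
  have hkey := key k m hk hm
  have hC : ((k+m:ℕ):ℝ)^(k+m+1) ≤
      8 * ((k:ℝ)^(k+1) * (m:ℝ)^(m+1)) * (((k+m).choose k : ℕ):ℝ) := by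
    have hpos : (0:ℝ) < (k ! : ℝ) * (m ! : ℝ) := by positivity
    have h2 : ((k+m:ℕ):ℝ)^(k+m+1) * ((k ! : ℝ) * (m ! : ℝ)) ≤
        (8 * ((k:ℝ)^(k+1) * (m:ℝ)^(m+1)) * (((k+m).choose k : ℕ):ℝ)) *
          ((k ! : ℝ) * (m ! : ℝ)) := by
      calc ((k+m:ℕ):ℝ)^(k+m+1) * ((k ! : ℝ) * (m ! : ℝ))
          ≤ 8 * ((k:ℝ)^(k+1) * (m:ℝ)^(m+1)) * ((k+m)! : ℝ) := hkey
        _ = _ := by rw [hfacteq]; ring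
    exact le_of_mul_le_mul_right h2 hpos
  have hden : (0:ℝ) < 8 * (k:ℝ) * ((m:ℝ)/((k+m:ℕ):ℝ)) := by positivity
  calc ((k+m:ℕ):ℝ)^(k+m) / ((k:ℝ)^k * (m:ℝ)^m) / (8 * (k:ℝ) * ((m:ℝ)/((k+m:ℕ):ℝ)))
      = ((k+m:ℕ):ℝ)^(k+m+1) / (8 * ((k:ℝ)^(k+1) * (m:ℝ)^(m+1))) := by
        rw [pow_succ, pow_succ, pow_succ]
        field_simp
    _ ≤ (8 * ((k:ℝ)^(k+1) * (m:ℝ)^(m+1)) * (((k+m).choose k : ℕ):ℝ)) /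
        (8 * ((k:ℝ)^(k+1) * (m:ℝ)^(m+1))) := by gcongr
    _ = (((k+m).choose k : ℕ):ℝ) := by
        exact mul_div_cancel_left₀ _
          (by positivity : (8 * ((k:ℝ)^(k+1) * (m:ℝ)^(m+1))) ≠ 0)
    _ ≤ ((cardSum (k+m) k : ℕ):ℝ) := hchoose

end Aux
end

section
/- Let n, m be natural numbers and let x, y ∈ (ZMod 2)^n with x ≠ y. Then the probability, over a uniformly random pair (A, b) where A is an m×n matrix over ZMod 2 and b ∈ (ZMod 2)^m, that both A·x = b and A·y = b hold equals 2^(-2m). -/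
open Finset Filter
open scoped Classical

/-! The map `A ↦ A *ᵥ (x - y)` is additive and, as `x - y ≠ 0`, onto `K^m`; so its kernel has
`|K|^(mn) / |K|^m` elements. A pair `(A, b)` with `A x = b = A y` is the same thing as a
kernel element `A` (then `b = A x`), which gives `2^(mn - m)` such pairs out of `2^(mn + m)`. -/

theorem Nat.card_graph_inter_graph {α β : Type*} (f g : α → β) :
    Nat.card {p : α × β // f p.1 = p.2 ∧ g p.1 = p.2} = Nat.card {a // f a = g a} :=
  Nat.card_congr
    { toFun p := ⟨p.1.1, p.2.1.trans p.2.2.symm⟩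
      invFun a := ⟨(a.1, f a.1), by exact ⟨rfl, a.2.symm⟩⟩
      left_inv p := Subtype.ext (Prod.ext rfl p.2.1)
      right_inv _ := rfl }

namespace Matrix

variable {K : Type*} [DivisionRing K] {m n : Type*} [Fintype n]

theorem surjective_mulVec_of_ne_zero_s16 {z : n → K} (hz : z ≠ 0) :
    Function.Surjective fun A : Matrix m n K => A *ᵥ z := by
  classical
  obtain ⟨j, hj⟩ := Function.ne_iff.mp hz
  intro v
  refine ⟨vecMulVec v (Pi.single j (z j)⁻¹), ?_⟩
  dsimp only
  rw [vecMulVec_mulVec, single_dotProduct, inv_mul_cancel₀ hj, MulOpposite.op_one, one_smul]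

theorem card_mulVec_eq_zero_mul_card {z : n → K} (hz : z ≠ 0) :
    Nat.card {A : Matrix m n K // A *ᵥ z = 0} * Nat.card (m → K) = Nat.card (Matrix m n K) := by
  let f : Matrix m n K →+ (m → K) := AddMonoidHom.mk' (· *ᵥ z) fun A B => add_mulVec A B z
  have hrange : f.range = ⊤ := AddMonoidHom.range_eq_top.mpr (surjective_mulVec_of_ne_zero_s16 hz)
  rw [← f.ker.card_mul_index, AddSubgroup.index_ker, hrange, AddSubgroup.card_top]
  rfl

theorem card_mulVec_eq_mulVec_mul_card {x y : n → K} (hxy : x ≠ y) :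
    Nat.card {A : Matrix m n K // A *ᵥ x = A *ᵥ y} * Nat.card (m → K) =
      Nat.card (Matrix m n K) := by
  simp_rw [← sub_eq_zero (a := _ *ᵥ x), ← mulVec_sub]
  exact card_mulVec_eq_zero_mul_card (sub_ne_zero.mpr hxy)

end Matrix

theorem stmt16 (n m : ℕ) (x y : Fin n → ZMod 2) (hxy : x ≠ y) :
    xorProb n m (fun ab => ab.1.mulVec x = ab.2 ∧ ab.1.mulVec y = ab.2) =
      (2 : ℝ) ^ (-(2 * m : ℤ)) := by
  have hcount := Matrix.card_mulVec_eq_mulVec_mul_card (m := Fin m) hxy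
  rw [← Nat.card_graph_inter_graph] at hcount
  have hpos := Nat.pos_of_mul_pos_right (hcount ▸ Nat.card_pos)
  rw [xorProb, ← Fintype.card_subtype, ← Nat.card_eq_fintype_card, ← Nat.card_eq_fintype_card,
    Nat.card_prod, ← hcount]
  simp only [Nat.card_eq_fintype_card, Fintype.card_fun, ZMod.card, Fintype.card_fin] at hpos ⊢
  push_cast
  rw [mul_assoc, div_mul_cancel_left₀ (by positivity), ← pow_add, ← two_mul, _root_.zpow_neg]
  norm_cast
end

section
/- Let n, m be natural numbers and let S be a nonempty finite subset of (ZMod 2)^n. Then the probability, over a uniformly random pair (A, b) where A is an m×n matrix over ZMod 2 and b ∈ (ZMod 2)^m, that no x ∈ S satisfies A·x = b is at most 2^m / |S|. -/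
open Finset Filter
open scoped Classical

private lemma matCard (n m : ℕ) :
    Fintype.card (Matrix (Fin m) (Fin n) (ZMod 2)) = 2 ^ (m * n) := by
  rw [Fintype.card_eq_nat_card]; simp [Matrix, ← pow_mul, Nat.mul_comm]

private lemma lineCard {α β : Type*} [Fintype α] [Fintype β] [DecidableEq β] (f : α → β) :
    (univ.filter fun ab : α × β => f ab.1 = ab.2).card = Fintype.card α := by
  have himg : (univ.filter fun ab : α × β => f ab.1 = ab.2)
      = univ.image (fun a => (a, f a)) := by
    ext ⟨a, b⟩
    simp only [mem_filter, mem_univ, true_and, mem_image, Prod.mk.injEq]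
    constructor
    · rintro h; exact ⟨a, rfl, h⟩
    · rintro ⟨a', rfl, rfl⟩; rfl
  rw [himg, Finset.card_image_of_injective _ (fun a b h => congrArg Prod.fst h),
    card_univ]

private lemma pairCard {α β : Type*} [Fintype α] [Fintype β] [DecidableEq β] (f g : α → β) :
    (univ.filter fun ab : α × β => f ab.1 = ab.2 ∧ g ab.1 = ab.2).card
      = (univ.filter fun a : α => f a = g a).card := by
  have himg : (univ.filter fun ab : α × β => f ab.1 = ab.2 ∧ g ab.1 = ab.2)
      = (univ.filter fun a : α => f a = g a).image (fun a => (a, f a)) := by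
    ext ⟨a, b⟩
    simp only [mem_filter, mem_univ, true_and, mem_image, Prod.mk.injEq]
    constructor
    · rintro ⟨h1, h2⟩; exact ⟨a, h1.trans h2.symm, rfl, h1⟩
    · rintro ⟨a', h1, rfl, rfl⟩; exact ⟨rfl, h1.symm⟩
  rw [himg, Finset.card_image_of_injective _ (fun a b h => congrArg Prod.fst h)]

private lemma fiberCard {n m : ℕ} (v : Fin n → ZMod 2) (hv : v ≠ 0) :
    (univ.filter fun A : Matrix (Fin m) (Fin n) (ZMod 2) => A.mulVec v = 0).card * 2 ^ m
      = 2 ^ (m * n) := by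
  obtain ⟨j, hj⟩ : ∃ j, v j ≠ 0 := by
    by_contra h; push_neg at h; exact hv (funext h)
  have hone : ∀ a : ZMod 2, a ≠ 0 → a = 1 := by decide
  have hj1 : v j = 1 := hone _ hj
  have hsurj : ∀ b : Fin m → ZMod 2,
      ∃ A : Matrix (Fin m) (Fin n) (ZMod 2), A.mulVec v = b := by
    intro b
    refine ⟨Matrix.of fun i k => if k = j then b i else 0, ?_⟩
    funext i
    simp only [Matrix.mulVec, dotProduct, Matrix.of_apply, ite_mul, zero_mul]
    rw [Finset.sum_ite_eq' univ j (fun x => b i * v x)]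
    simp [hj1]
  have hfib : ∀ b : Fin m → ZMod 2,
      (univ.filter fun A : Matrix (Fin m) (Fin n) (ZMod 2) => A.mulVec v = b).card
        = (univ.filter fun A : Matrix (Fin m) (Fin n) (ZMod 2) => A.mulVec v = 0).card := by
    intro b
    obtain ⟨A0, hA0⟩ := hsurj b
    apply Finset.card_bij' (fun A _ => A - A0) (fun A _ => A + A0)
    · intro A hA
      simp only [mem_filter, mem_univ, true_and] at hA ⊢
      rw [Matrix.sub_mulVec, hA, hA0, sub_self]
    · intro A hA
      simp only [mem_filter, mem_univ, true_and] at hA ⊢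
      rw [Matrix.add_mulVec, hA, hA0, zero_add]
    · intro A hA; simp
    · intro A hA; simp
  have htot : (univ : Finset (Matrix (Fin m) (Fin n) (ZMod 2))).card
      = ∑ b : Fin m → ZMod 2,
          (univ.filter fun A : Matrix (Fin m) (Fin n) (ZMod 2) => A.mulVec v = b).card :=
    Finset.card_eq_sum_card_fiberwise (fun A _ => mem_univ _)
  have hcardb : Fintype.card (Fin m → ZMod 2) = 2 ^ m := by simp
  rw [card_univ, matCard] at htot
  simp only [hfib, Finset.sum_const, card_univ, hcardb, smul_eq_mul] at htot
  rw [mul_comm]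
  exact htot.symm

set_option maxHeartbeats 1000000 in
theorem stmt17 (n m : ℕ) (S : Finset (Fin n → ZMod 2)) (hS : S.Nonempty) :
    xorProb n m (fun ab => ∀ x ∈ S, ab.1.mulVec x ≠ ab.2) ≤
      (2 : ℝ) ^ m / S.card := by
  set Z : Matrix (Fin m) (Fin n) (ZMod 2) × (Fin m → ZMod 2) → ℕ :=
    fun ab => (S.filter fun x => ab.1.mulVec x = ab.2).card with hZ
  -- first moment
  have hZ1 : ∑ ab : Matrix (Fin m) (Fin n) (ZMod 2) × (Fin m → ZMod 2), Z ab
      = S.card * 2 ^ (m * n) := by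
    have h1 : ∀ ab : Matrix (Fin m) (Fin n) (ZMod 2) × (Fin m → ZMod 2),
        Z ab = ∑ x ∈ S, if ab.1.mulVec x = ab.2 then 1 else 0 := by
      intro ab; exact Finset.card_filter _ _
    calc ∑ ab : Matrix (Fin m) (Fin n) (ZMod 2) × (Fin m → ZMod 2), Z ab
        = ∑ ab : Matrix (Fin m) (Fin n) (ZMod 2) × (Fin m → ZMod 2),
            ∑ x ∈ S, if ab.1.mulVec x = ab.2 then 1 else 0 :=
          Finset.sum_congr rfl fun ab _ => h1 ab
      _ = ∑ x ∈ S, ∑ ab : Matrix (Fin m) (Fin n) (ZMod 2) × (Fin m → ZMod 2),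
            if ab.1.mulVec x = ab.2 then 1 else 0 := Finset.sum_comm
      _ = ∑ x ∈ S, (univ.filter fun ab : Matrix (Fin m) (Fin n) (ZMod 2) ×
            (Fin m → ZMod 2) => ab.1.mulVec x = ab.2).card := by
          refine Finset.sum_congr rfl fun x _ => ?_
          rw [Finset.card_filter]
      _ = ∑ x ∈ S, 2 ^ (m * n) := by
          refine Finset.sum_congr rfl fun x _ => ?_
          rw [lineCard (fun A : Matrix (Fin m) (Fin n) (ZMod 2) => A.mulVec x), matCard]
      _ = S.card * 2 ^ (m * n) := by rw [Finset.sum_const, smul_eq_mul]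
  -- pairwise counts
  have hoff : ∀ x y : Fin n → ZMod 2, x ≠ y →
      (univ.filter fun A : Matrix (Fin m) (Fin n) (ZMod 2) =>
        A.mulVec x = A.mulVec y).card * 2 ^ m = 2 ^ (m * n) := by
    intro x y hxy
    have hfe : (univ.filter fun A : Matrix (Fin m) (Fin n) (ZMod 2) =>
        A.mulVec x = A.mulVec y)
        = (univ.filter fun A : Matrix (Fin m) (Fin n) (ZMod 2) =>
            A.mulVec (x - y) = 0) := by
      apply Finset.filter_congr
      intro A _
      rw [Matrix.mulVec_sub, sub_eq_zero]
    rw [hfe]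
    exact fiberCard (x - y) (sub_ne_zero.mpr hxy)
  -- second moment
  have hZ2 : (∑ ab : Matrix (Fin m) (Fin n) (ZMod 2) × (Fin m → ZMod 2), Z ab ^ 2) * 2 ^ m
      ≤ S.card * 2 ^ (m * n) * 2 ^ m + S.card ^ 2 * 2 ^ (m * n) := by
    have hsq : ∀ ab : Matrix (Fin m) (Fin n) (ZMod 2) × (Fin m → ZMod 2),
        Z ab ^ 2 = ∑ p ∈ S ×ˢ S,
        if ab.1.mulVec p.1 = ab.2 ∧ ab.1.mulVec p.2 = ab.2 then 1 else 0 := by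
      intro ab
      rw [hZ, sq]
      simp only [Finset.card_filter]
      rw [Finset.sum_mul_sum, Finset.sum_product]
      refine Finset.sum_congr rfl fun x _ => Finset.sum_congr rfl fun y _ => ?_
      by_cases h1 : ab.1.mulVec x = ab.2 <;> by_cases h2 : ab.1.mulVec y = ab.2 <;>
        simp [h1, h2]
    have hswap : ∑ ab : Matrix (Fin m) (Fin n) (ZMod 2) × (Fin m → ZMod 2), Z ab ^ 2
        = ∑ p ∈ S ×ˢ S,
        (univ.filter fun ab : Matrix (Fin m) (Fin n) (ZMod 2) × (Fin m → ZMod 2) =>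
          ab.1.mulVec p.1 = ab.2 ∧ ab.1.mulVec p.2 = ab.2).card := by
      calc ∑ ab : Matrix (Fin m) (Fin n) (ZMod 2) × (Fin m → ZMod 2), Z ab ^ 2
          = ∑ ab : Matrix (Fin m) (Fin n) (ZMod 2) × (Fin m → ZMod 2), ∑ p ∈ S ×ˢ S,
              if ab.1.mulVec p.1 = ab.2 ∧ ab.1.mulVec p.2 = ab.2 then 1 else 0 :=
            Finset.sum_congr rfl fun ab _ => hsq ab
        _ = ∑ p ∈ S ×ˢ S, ∑ ab : Matrix (Fin m) (Fin n) (ZMod 2) × (Fin m → ZMod 2),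
              if ab.1.mulVec p.1 = ab.2 ∧ ab.1.mulVec p.2 = ab.2 then 1 else 0 :=
            Finset.sum_comm
        _ = _ := by
            refine Finset.sum_congr rfl fun p _ => ?_
            rw [Finset.card_filter]
    rw [hswap, Finset.sum_mul]
    have hbound : ∀ x y : Fin n → ZMod 2,
        (univ.filter fun ab : Matrix (Fin m) (Fin n) (ZMod 2) × (Fin m → ZMod 2) =>
          ab.1.mulVec x = ab.2 ∧ ab.1.mulVec y = ab.2).card * 2 ^ m
        ≤ (if x = y then 2 ^ (m * n) * 2 ^ m else 0) + 2 ^ (m * n) := by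
      intro x y
      rw [pairCard (fun A : Matrix (Fin m) (Fin n) (ZMod 2) => A.mulVec x)
        (fun A => A.mulVec y)]
      by_cases hxy : x = y
      · subst hxy
        rw [if_pos rfl]
        have h2 : (univ.filter fun A : Matrix (Fin m) (Fin n) (ZMod 2) =>
            A.mulVec x = A.mulVec x).card ≤ 2 ^ (m * n) := by
          rw [← matCard n m, ← card_univ]
          exact Finset.card_filter_le _ _
        have h3 := Nat.mul_le_mul_right (2 ^ m) h2
        omega
      · simp only [if_neg hxy, zero_add]
        exact (hoff x y hxy).le
    calc ∑ p ∈ S ×ˢ S,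
          (univ.filter fun ab : Matrix (Fin m) (Fin n) (ZMod 2) × (Fin m → ZMod 2) =>
            ab.1.mulVec p.1 = ab.2 ∧ ab.1.mulVec p.2 = ab.2).card * 2 ^ m
        ≤ ∑ p ∈ S ×ˢ S, ((if p.1 = p.2 then 2 ^ (m * n) * 2 ^ m else 0) + 2 ^ (m * n)) :=
          Finset.sum_le_sum (fun p _ => hbound p.1 p.2)
      _ = (∑ p ∈ S ×ˢ S, if p.1 = p.2 then 2 ^ (m * n) * 2 ^ m else 0)
            + (S ×ˢ S).card * 2 ^ (m * n) := by
          rw [Finset.sum_add_distrib, Finset.sum_const, smul_eq_mul]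
      _ ≤ S.card * (2 ^ (m * n) * 2 ^ m) + S.card ^ 2 * 2 ^ (m * n) := by
          have hd : (∑ p ∈ S ×ˢ S, if p.1 = p.2 then 2 ^ (m * n) * 2 ^ m else 0)
              ≤ S.card * (2 ^ (m * n) * 2 ^ m) := by
            rw [Finset.sum_product]
            calc ∑ x ∈ S, ∑ y ∈ S, (if x = y then 2 ^ (m * n) * 2 ^ m else 0)
                ≤ ∑ x ∈ S, 2 ^ (m * n) * 2 ^ m := by
                  refine Finset.sum_le_sum fun x _ => ?_
                  rw [Finset.sum_ite_eq S x (fun _ => 2 ^ (m * n) * 2 ^ m)]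
                  split <;> simp
              _ = S.card * (2 ^ (m * n) * 2 ^ m) := by
                  rw [Finset.sum_const, smul_eq_mul]
            
          have he : (S ×ˢ S).card = S.card ^ 2 := by rw [Finset.card_product, sq]
          rw [he]
          exact Nat.add_le_add_right hd _
      _ = S.card * 2 ^ (m * n) * 2 ^ m + S.card ^ 2 * 2 ^ (m * n) := by ring
  -- support
  set T : Finset (Matrix (Fin m) (Fin n) (ZMod 2) × (Fin m → ZMod 2)) :=
    univ.filter (fun ab => ¬ ∀ x ∈ S, ab.1.mulVec x ≠ ab.2) with hT
  have hsupp : ∀ ab : Matrix (Fin m) (Fin n) (ZMod 2) × (Fin m → ZMod 2),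
      ab ∉ T → Z ab = 0 := by
    intro ab h
    rw [hT, mem_filter, not_and, not_not] at h
    rw [hZ]
    simp only [Finset.card_eq_zero, Finset.filter_eq_empty_iff]
    exact h (mem_univ ab)
  -- real versions
  have hsum1 : ∑ ab ∈ T, (Z ab : ℝ) = (S.card : ℝ) * 2 ^ (m * n) := by
    rw [Finset.sum_subset (Finset.subset_univ T)
      (fun ab _ hab => by rw [hsupp ab hab]; norm_num), ← Nat.cast_sum, hZ1]
    push_cast
    ring
  have hsum2 : (∑ ab ∈ T, (Z ab : ℝ) ^ 2) * 2 ^ m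
      ≤ (S.card : ℝ) * 2 ^ (m * n) * 2 ^ m + (S.card : ℝ) ^ 2 * 2 ^ (m * n) := by
    rw [Finset.sum_subset (Finset.subset_univ T)
      (fun ab _ hab => by rw [hsupp ab hab]; norm_num)]
    calc (∑ ab : Matrix (Fin m) (Fin n) (ZMod 2) × (Fin m → ZMod 2), (Z ab : ℝ) ^ 2)
          * 2 ^ m
        = (((∑ ab : Matrix (Fin m) (Fin n) (ZMod 2) × (Fin m → ZMod 2), Z ab ^ 2)
            * 2 ^ m : ℕ) : ℝ) := by push_cast; ring
      _ ≤ ((S.card * 2 ^ (m * n) * 2 ^ m + S.card ^ 2 * 2 ^ (m * n) : ℕ) : ℝ) := by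
          exact_mod_cast hZ2
      _ = _ := by push_cast; ring
  have hCS : (∑ ab ∈ T, (Z ab : ℝ)) ^ 2 ≤ T.card * ∑ ab ∈ T, (Z ab : ℝ) ^ 2 :=
    sq_sum_le_card_mul_sum_sq
  -- counting the complement
  have hNT : (univ.filter fun ab : Matrix (Fin m) (Fin n) (ZMod 2) × (Fin m → ZMod 2) =>
        ∀ x ∈ S, ab.1.mulVec x ≠ ab.2).card + T.card
      = 2 ^ (m * n) * 2 ^ m := by
    rw [hT, Finset.card_filter_add_card_filter_not, card_univ,
      Fintype.card_prod, matCard]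
    simp
  -- finish with real arithmetic
  unfold xorProb
  rw [Finset.filter_congr_decidable]
  have hcardΩ : (Fintype.card (Matrix (Fin m) (Fin n) (ZMod 2) × (Fin m → ZMod 2)) : ℝ)
      = 2 ^ (m * n) * 2 ^ m := by
    rw [Fintype.card_prod, matCard]
    push_cast
    simp
  rw [hcardΩ]
  set N : ℝ := ((univ.filter fun ab : Matrix (Fin m) (Fin n) (ZMod 2) ×
    (Fin m → ZMod 2) => ∀ x ∈ S, ab.1.mulVec x ≠ ab.2).card : ℝ) with hN
  set t : ℝ := (T.card : ℝ) with ht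
  set s : ℝ := (S.card : ℝ) with hs
  have hs1 : (1 : ℝ) ≤ s := by
    rw [hs]
    exact_mod_cast Nat.one_le_iff_ne_zero.mpr
      (Finset.card_ne_zero_of_mem hS.choose_spec)
  have hM1 : (1 : ℝ) ≤ (2 : ℝ) ^ (m * n) := one_le_pow₀ (by norm_num)
  have hP1 : (1 : ℝ) ≤ (2 : ℝ) ^ m := one_le_pow₀ (by norm_num)
  have hNt : N + t = (2 : ℝ) ^ (m * n) * 2 ^ m := by
    rw [hN, ht]
    exact_mod_cast hNT
  have hN0 : 0 ≤ N := by rw [hN]; exact Nat.cast_nonneg _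
  have ht0 : 0 ≤ t := by rw [ht]; exact Nat.cast_nonneg _
  have hcs' : (s * 2 ^ (m * n)) ^ 2 ≤ t * ∑ ab ∈ T, (Z ab : ℝ) ^ 2 := by
    rw [← hsum1]; exact hCS
  have hkey : N * s ≤ (2 : ℝ) ^ (m * n) * 2 ^ m * 2 ^ m := by
    have h1 : s * 2 ^ (m * n) * 2 ^ m ≤ t * (2 ^ m + s) := by
      have h2 : (s * 2 ^ (m * n)) ^ 2 * 2 ^ m
          ≤ t * (s * 2 ^ (m * n) * 2 ^ m + s ^ 2 * 2 ^ (m * n)) := by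
        calc (s * 2 ^ (m * n)) ^ 2 * 2 ^ m
            ≤ (t * ∑ ab ∈ T, (Z ab : ℝ) ^ 2) * 2 ^ m :=
              mul_le_mul_of_nonneg_right hcs' (by positivity)
          _ = t * ((∑ ab ∈ T, (Z ab : ℝ) ^ 2) * 2 ^ m) := by ring
          _ ≤ t * (s * 2 ^ (m * n) * 2 ^ m + s ^ 2 * 2 ^ (m * n)) :=
              mul_le_mul_of_nonneg_left hsum2 ht0
      nlinarith [mul_pos (lt_of_lt_of_le one_pos hs1) (lt_of_lt_of_le one_pos hM1)]
    nlinarith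
  rw [div_le_div_iff₀ (by positivity) (by positivity : (0 : ℝ) < s)]
  calc N * s ≤ (2 : ℝ) ^ (m * n) * 2 ^ m * 2 ^ m := hkey
    _ = 2 ^ m * ((2 : ℝ) ^ (m * n) * 2 ^ m) := by ring
end
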